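/- arXiv:1211.3232 — 7 statements merged into one kernel-verified Lean document; each statement's English description precedes it below -/
import Mathlib

section
/- If v is a solution of the radial ODE ((n-1)/m)((v^m)'' + ((n-1)/r)(v^m)') + αv + βrv' = 0 on (0,∞) with v > 0, v(0) = η, v'(0) = 0, then for all r > 0: -((n-1)/m)(v^m)'(r) = βrv(r) + ((α - nβ)/r^(n-1)) ∫₀^r z^(n-1) v(z) dz. -/
/-!
Multiplying the equation by `r^(n-1)` puts it in divergence form: with `w = v^m` and
`k = n - 1`, the flux `r^k ((n-1)/m w' + β r v)` has derivative `-(α - nβ) r^k v`, because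
`(r^k g)' = r^k (g' + k g / r)`. Integrating from `0`, where the weight `r^k` vanishes, gives the
identity.
-/

open MeasureTheory Set

theorem HasDerivAt.pow_mul_of_ne_zero {k : ℕ} {g : ℝ → ℝ} {g' x : ℝ} (hg : HasDerivAt g g' x)
    (hx : x ≠ 0) : HasDerivAt (fun y => y ^ k * g y) (x ^ k * (g' + k / x * g x)) x := by
  refine ((hasDerivAt_pow k x).fun_mul hg).congr_deriv ?_
  rcases k with _ | k
  · simp
  · rw [pow_succ, Nat.add_sub_cancel]
    field_simp
    ring

theorem pow_mul_eq_integral_pow_mul {k : ℕ} (hk : k ≠ 0) {g g' f : ℝ → ℝ} {r : ℝ} (hr : 0 ≤ r)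
    (hg : ContinuousOn g (Icc 0 r)) (hf : ContinuousOn f (Icc 0 r))
    (hderiv : ∀ x ∈ Ioo 0 r, HasDerivAt g (g' x) x)
    (heq : ∀ x ∈ Ioo 0 r, g' x + k / x * g x = f x) :
    r ^ k * g r = ∫ x in 0..r, x ^ k * f x := by
  have hflux : ∀ x ∈ Ioo 0 r, HasDerivAt (fun y => y ^ k * g y) (x ^ k * f x) x := fun x hx =>
    heq x hx ▸ (hderiv x hx).pow_mul_of_ne_zero hx.1.ne'
  rw [intervalIntegral.integral_eq_sub_of_hasDerivAt_of_le hr ((continuousOn_pow k).mul hg) hflux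
    (((continuousOn_pow k).mul hf).intervalIntegrable_of_Icc hr)]
  simp [zero_pow hk]

theorem stmt_2_general (n : ℕ) (hn : 3 ≤ n) (m α β : ℝ)
    (v : ℝ → ℝ) (hv : ContDiff ℝ 2 v) (hpos : ∀ r, 0 ≤ r → 0 < v r)
    (hode : ∀ r, 0 < r →
      ((n : ℝ) - 1) / m * (deriv (deriv (fun s => v s ^ m)) r
        + (((n : ℝ) - 1) / r) * deriv (fun s => v s ^ m) r)
      + α * v r + β * r * deriv v r = 0) :
    ∀ r, 0 < r →
      -(((n : ℝ) - 1) / m) * deriv (fun s => v s ^ m) r =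
        β * r * v r + ((α - n * β) / r ^ (n - 1)) * ∫ z in (0 : ℝ)..r, z ^ (n - 1) * v z := by
  intro r hr
  set w : ℝ → ℝ := fun s => v s ^ m
  have hw : ∀ x, 0 ≤ x → ContDiffAt ℝ 1 (deriv w) x := fun x hx =>
    (hv.contDiffAt.rpow_const_of_ne (hpos x hx).ne').derivWithin (by norm_num)
  have hv' : ∀ x, HasDerivAt v (deriv v x) x := fun x =>
    (hv.differentiable (by norm_num) x).hasDerivAt
  have hk : ((n - 1 : ℕ) : ℝ) = n - 1 := Nat.cast_pred (by omega)
  have hflux := pow_mul_eq_integral_pow_mul (k := n - 1) (by omega) hr.le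
    (g := fun x => (n - 1) / m * deriv w x + β * x * v x)
    (g' := fun x => (n - 1) / m * deriv (deriv w) x + (β * v x + β * x * deriv v x))
    (f := fun x => -(α - n * β) * v x)
    (fun x hx => ((continuousAt_const.mul (hw x hx.1).continuousAt).add
      (continuousAt_const.mul continuousAt_id |>.mul (hv' x).continuousAt)).continuousWithinAt)
    (continuousOn_const.mul hv.continuous.continuousOn)
    (fun x hx => (((hw x hx.1.le).differentiableAt one_ne_zero).hasDerivAt.const_mul _).add
      ((hasDerivAt_const_mul β).mul (hv' x)))
    (fun x hx => by
      have := hx.1.ne'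
      rw [hk]
      linear_combination (norm := (field_simp; ring)) hode x hx.1)
  simp only [mul_left_comm _ (-(α - n * β)), intervalIntegral.integral_const_mul] at hflux
  field_simp
  linear_combination -hflux

theorem stmt_2 (n : ℕ) (hn : 3 ≤ n) (m α β η : ℝ) (hm : 0 < m) (hη : 0 < η)
    (v : ℝ → ℝ) (hv : ContDiff ℝ 2 v) (hpos : ∀ r, 0 ≤ r → 0 < v r)
    (hode : ∀ r, 0 < r →
      ((n : ℝ) - 1) / m * (deriv (deriv (fun s => v s ^ m)) r
        + (((n : ℝ) - 1) / r) * deriv (fun s => v s ^ m) r)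
      + α * v r + β * r * deriv v r = 0)
    (hv0 : v 0 = η) (hv'0 : deriv v 0 = 0) :
    ∀ r, 0 < r →
      -(((n : ℝ) - 1) / m) * deriv (fun s => v s ^ m) r =
        β * r * v r + ((α - n * β) / r ^ (n - 1)) * ∫ z in (0 : ℝ)..r, z ^ (n - 1) * v z :=
  stmt_2_general n hn m α β v hv hpos hode
end

section
/- Let v be a solution of the radial ODE ((n-1)/m)((v^m)'' + ((n-1)/r)(v^m)') + αv + βrv' = 0 on (0,∞), v > 0, with v(0) = η > 0 and v'(0) = 0, where β > 0 and α ≤ nβ. Then v(r) ≥ (η^(m-1) + ((1-m)β/(2(n-1))) r²)^(-1/(1-m)) for all r ≥ 0. In particular there exists C₂ > 0 such that r² v(r)^(1-m) ≥ C₂ for all r ≥ 1. -/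
/-! With `P = ((n - 1) / m) (v ^ m)'` the equation reads `P' + ((n - 1) / r) P = -(α v + β r v')`,
so `(r ^ (n - 1) (P + β r v))' = (n β - α) r ^ (n - 1) v ≥ 0`. The bracketed quantity vanishes at
`r = 0`, hence `(n - 1) v ^ (m - 1) v' + β r v ≥ 0`, which says precisely that
`c r ^ 2 - v ^ (m - 1)` is nondecreasing for `c = (1 - m) β / (2 (n - 1))`. Thus
`v ^ (m - 1) ≤ η ^ (m - 1) + c r ^ 2`; raising to the power `-1 / (1 - m)` gives the lower bound,
and `r ^ 2 / (η ^ (m - 1) + c r ^ 2) ≥ 1 / (η ^ (m - 1) + c)` for `r ≥ 1` gives `C₂`. -/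

open Set

theorem le_of_hasDerivAt_nonneg_of_pos {f f' : ℝ → ℝ} (hf : ContinuousOn f (Ici 0))
    (hf' : ∀ x, 0 < x → HasDerivAt f (f' x) x) (hf'₀ : ∀ x, 0 < x → 0 ≤ f' x)
    {r : ℝ} (hr : 0 ≤ r) : f 0 ≤ f r := by
  refine monotoneOn_of_hasDerivWithinAt_nonneg (f' := f') (convex_Ici 0) hf ?_ ?_
    self_mem_Ici hr hr
  · simp only [interior_Ici, mem_Ioi]
    exact fun x hx => (hf' x hx).hasDerivWithinAt
  · simpa only [interior_Ici, mem_Ioi] using hf'₀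

theorem hasDerivAt_pow_mul_flux {P v : ℝ → ℝ} {P' v' r α β : ℝ} (k : ℕ) (hr : 0 < r)
    (hP : HasDerivAt P P' r) (hv : HasDerivAt v v' r)
    (hode : P' + k / r * P r + α * v r + β * r * v' = 0) :
    HasDerivAt (fun s => s ^ k * (P s + β * s * v s)) (r ^ k * v r * ((k + 1) * β - α)) r := by
  have hpow : HasDerivAt (fun s => s ^ k) (k / r * r ^ k) r := by
    refine (hasDerivAt_pow k r).congr_deriv ?_
    cases k with
    | zero => simp
    | succ k => rw [pow_succ]; field_simp; simp
  refine (hpow.mul (hP.add (((hasDerivAt_id r).const_mul β).mul hv))).congr_deriv ?_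
  have hkr : k / r * r = k := div_mul_cancel₀ _ hr.ne'
  simp only [Pi.add_apply, Pi.mul_apply, id, mul_one]
  linear_combination r ^ k * hode + (r ^ k * β * v r) * hkr

theorem radial_flux_nonneg {v : ℝ → ℝ} {m α β : ℝ} (n : ℕ) (hn : 1 ≤ n) (hm : m ≠ 0)
    (hv : ContDiff ℝ 2 v) (hpos : ∀ r, 0 ≤ r → 0 < v r)
    (hode : ∀ r, 0 < r →
      ((n : ℝ) - 1) / m * (deriv (deriv (fun s => v s ^ m)) r
        + (((n : ℝ) - 1) / r) * deriv (fun s => v s ^ m) r)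
      + α * v r + β * r * deriv v r = 0)
    (hαβ : α ≤ n * β) {r : ℝ} (hr : 0 < r) :
    0 ≤ ((n : ℝ) - 1) * v r ^ (m - 1) * deriv v r + β * r * v r := by
  set k := n - 1
  have hk : (k : ℝ) = n - 1 := by simp [k, Nat.cast_sub hn]
  set w := fun s => v s ^ m
  set U := {x | 0 < v x}
  have hU : IsOpen U := isOpen_lt continuous_const hv.continuous
  have hw : ContDiffOn ℝ 1 (deriv w) U :=
    (hv.contDiffOn.rpow_const_of_ne fun x hx => ne_of_gt hx).deriv_of_isOpen hU (by norm_num)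
  set G := fun s => s ^ k * (((n : ℝ) - 1) / m * deriv w s + β * s * v s)
  have hGcont : ContinuousOn G (Ici 0) := by
    refine (continuousOn_pow k).mul (ContinuousOn.add ?_ ?_)
    · exact (hw.continuousOn.mono fun x hx => hpos x hx).const_smul (((n : ℝ) - 1) / m)
    · exact (continuous_const.mul continuous_id).mul hv.continuous |>.continuousOn
  have hG' : ∀ x, 0 < x → HasDerivAt G (x ^ k * v x * (((k : ℝ) + 1) * β - α)) x := by
    intro x hx
    have hwx := ((hw.differentiableOn one_ne_zero x (hpos x hx.le)).differentiableAt
      (hU.mem_nhds (hpos x hx.le))).hasDerivAt.const_mul (((n : ℝ) - 1) / m)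
    refine hasDerivAt_pow_mul_flux k hx hwx ((hv.differentiable (by norm_num) x).hasDerivAt) ?_
    rw [hk]
    linear_combination hode x hx
  have hG0 : 0 ≤ G r := by
    have h := le_of_hasDerivAt_nonneg_of_pos hGcont hG' (fun x hx => by
      have := hpos x hx.le
      have : ((k : ℝ) + 1) * β - α ≥ 0 := by rw [hk]; linarith
      positivity) hr.le
    have h0 : G 0 = 0 := by
      rcases Nat.eq_zero_or_pos k with h | h
      · simp [G, h, show (n : ℝ) - 1 = 0 by rw [← hk, h]; simp]
      · simp [G, zero_pow h.ne']
    linarith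
  have hdw : deriv w r = deriv v r * m * v r ^ (m - 1) :=
    deriv_rpow_const (hv.differentiable (by norm_num) r) (Or.inl (hpos r hr.le).ne')
  have hflux := nonneg_of_mul_nonneg_right hG0 (pow_pos hr k)
  rwa [hdw, show ((n : ℝ) - 1) / m * (deriv v r * m * v r ^ (m - 1))
    = ((n : ℝ) - 1) * v r ^ (m - 1) * deriv v r by field_simp] at hflux

theorem rpow_sub_one_le_of_flux_nonneg {v : ℝ → ℝ} {m β K : ℝ} (hK : 0 < K) (hm : m ≤ 1)
    (hv : Differentiable ℝ v) (hpos : ∀ r, 0 ≤ r → 0 < v r)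
    (hflux : ∀ r, 0 < r → 0 ≤ K * v r ^ (m - 1) * deriv v r + β * r * v r)
    {r : ℝ} (hr : 0 ≤ r) :
    v r ^ (m - 1) ≤ v 0 ^ (m - 1) + (1 - m) * β / (2 * K) * r ^ 2 := by
  set c := (1 - m) * β / (2 * K)
  have hφcont : ContinuousOn (fun s => c * s ^ 2 - v s ^ (m - 1)) (Ici 0) :=
    (continuous_const.mul (continuous_pow 2)).continuousOn.sub
      (hv.continuous.continuousOn.rpow_const fun x hx => Or.inl (hpos x hx).ne')
  have hφ' : ∀ x, 0 < x → HasDerivAt (fun s => c * s ^ 2 - v s ^ (m - 1))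
      ((1 - m) / (K * v x) * (K * v x ^ (m - 1) * deriv v x + β * x * v x)) x := by
    intro x hx
    have hvx := hpos x hx.le
    refine (((hasDerivAt_pow 2 x).const_mul c).sub
      ((hv x).hasDerivAt.rpow_const (Or.inl hvx.ne'))).congr_deriv ?_
    rw [Real.rpow_sub_one hvx.ne' (m - 1)]
    simp only [c]
    field_simp
    ring
  have := le_of_hasDerivAt_nonneg_of_pos hφcont hφ'
    (fun x hx => mul_nonneg (div_nonneg (by linarith) (mul_pos hK (hpos x hx.le)).le)
      (hflux x hx)) hr
  simp only [ne_eq, OfNat.ofNat_ne_zero, not_false_eq_true, zero_pow, mul_zero, zero_sub] at this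
  linarith

theorem rpow_neg_one_div_le_of_rpow_neg_le {a p X : ℝ} (ha : 0 < a) (hp : 0 < p)
    (h : a ^ (-p) ≤ X) : X ^ (-(1 / p)) ≤ a := by
  calc X ^ (-(1 / p)) ≤ (a ^ (-p)) ^ (-(1 / p)) :=
        Real.rpow_le_rpow_of_nonpos (by positivity) h (by simp only [neg_nonpos]; positivity)
    _ = a := by rw [← Real.rpow_mul ha.le, neg_mul_neg, mul_one_div_cancel hp.ne', Real.rpow_one]

theorem inv_add_le_sq_mul_inv_add {A c r : ℝ} (hA : 0 < A) (hc : 0 ≤ c) (hr : 1 ≤ r) :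
    (A + c)⁻¹ ≤ r ^ 2 * (A + c * r ^ 2)⁻¹ := by
  rw [← div_eq_mul_inv, inv_eq_one_div, div_le_div_iff₀ (by positivity) (by positivity)]
  nlinarith [mul_le_mul_of_nonneg_left (one_le_pow₀ hr : (1 : ℝ) ≤ r ^ 2) hA.le]

theorem stmt_3_general (n : ℕ) (hn : 3 ≤ n) (m α β η : ℝ)
    (hm : 0 < m) (hm2 : m < ((n : ℝ) - 2) / n) (hη : 0 < η)
    (v : ℝ → ℝ) (hv : ContDiff ℝ 2 v) (hpos : ∀ r, 0 ≤ r → 0 < v r)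
    (hode : ∀ r, 0 < r →
      ((n : ℝ) - 1) / m * (deriv (deriv (fun s => v s ^ m)) r
        + (((n : ℝ) - 1) / r) * deriv (fun s => v s ^ m) r)
      + α * v r + β * r * deriv v r = 0)
    (hv0 : v 0 = η) (hβ : 0 < β) (hαβ : α ≤ n * β) :
    (∀ r, 0 ≤ r →
      v r ≥ (η ^ (m - 1) + ((1 - m) * β / (2 * ((n : ℝ) - 1))) * r ^ 2) ^ (-(1 / (1 - m)))) ∧
    ∃ C₂ > 0, ∀ r, 1 ≤ r → r ^ 2 * v r ^ (1 - m) ≥ C₂ := by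
  have hn' : (3 : ℝ) ≤ n := by exact_mod_cast hn
  have hm1 : m < 1 := hm2.trans_le (by rw [div_le_one (by positivity)]; linarith)
  set c := (1 - m) * β / (2 * ((n : ℝ) - 1))
  have hc : 0 < c := div_pos (mul_pos (by linarith) hβ) (by linarith)
  have hA : 0 < η ^ (m - 1) := by positivity
  have hbound : ∀ r, 0 ≤ r → v r ^ (-(1 - m)) ≤ η ^ (m - 1) + c * r ^ 2 := fun r hr => by
    rw [neg_sub, ← hv0]
    exact rpow_sub_one_le_of_flux_nonneg (by linarith) hm1.le (hv.differentiable (by norm_num))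
      hpos (fun s hs => radial_flux_nonneg n (by omega) hm.ne' hv hpos hode hαβ hs) hr
  refine ⟨fun r hr => rpow_neg_one_div_le_of_rpow_neg_le (hpos r hr) (by linarith) (hbound r hr),
    (η ^ (m - 1) + c)⁻¹, inv_pos.mpr (by linarith), fun r hr => ?_⟩
  have hvr := hpos r (by linarith)
  calc (η ^ (m - 1) + c)⁻¹ ≤ r ^ 2 * (η ^ (m - 1) + c * r ^ 2)⁻¹ :=
        inv_add_le_sq_mul_inv_add hA hc.le hr
    _ ≤ r ^ 2 * v r ^ (1 - m) := by
        gcongr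
        rw [← inv_inv (v r ^ (1 - m)), ← Real.rpow_neg hvr.le]
        exact inv_anti₀ (Real.rpow_pos_of_pos hvr _) (hbound r (by linarith))

theorem stmt_3 (n : ℕ) (hn : 3 ≤ n) (m ρ α β η : ℝ)
    (hm : 0 < m) (hm2 : m < ((n : ℝ) - 2) / n) (hρ : 0 < ρ)
    (hα : α = (2 * β + ρ) / (1 - m)) (hη : 0 < η)
    (v : ℝ → ℝ) (hv : ContDiff ℝ 2 v) (hpos : ∀ r, 0 ≤ r → 0 < v r)
    (hode : ∀ r, 0 < r →
      ((n : ℝ) - 1) / m * (deriv (deriv (fun s => v s ^ m)) r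
        + (((n : ℝ) - 1) / r) * deriv (fun s => v s ^ m) r)
      + α * v r + β * r * deriv v r = 0)
    (hv0 : v 0 = η) (hv0d : deriv v 0 = 0)
    (hβ : 0 < β) (hαβ : α ≤ n * β) :
    (∀ r, 0 ≤ r →
      v r ≥ (η ^ (m - 1) + ((1 - m) * β / (2 * ((n : ℝ) - 1))) * r ^ 2) ^ (-(1 / (1 - m)))) ∧
    ∃ C₂ > 0, ∀ r, 1 ≤ r → r ^ 2 * v r ^ (1 - m) ≥ C₂ :=
  stmt_3_general n hn m α β η hm hm2 hη v hv hpos hode hv0 hβ hαβ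
end

section
/- Let v be a solution of the radial ODE ((n-1)/m)((v^m)'' + ((n-1)/r)(v^m)') + αv + βrv' = 0 on (0,∞), v > 0, with v(0) = η > 0 and v'(0) = 0, where α ≥ nβ > 0. Then v(r) ≤ (η^(m-1) + (α(1-m)/(2n(n-1))) r²)^(-1/(1-m)) for all r > 0; in particular r² v(r)^(1-m) ≤ 2n(n-1)/(α(1-m)) for all r ≥ 1. -/
/-! With `w = v ^ m`, multiplying the equation by `r ^ (n - 1)` puts it in divergence form, and
integrating from `0` gives the flux identity
`r ^ (n - 1) w'(r) = -(m / (n - 1)) (β r ^ n v(r) + (α - n β) ∫₀ʳ s ^ (n - 1) v(s) ds)`.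
Its right side is `≤ 0`, so `v` is nonincreasing; hence `∫₀ʳ s ^ (n - 1) v ≥ v(r) r ^ n / n`,
and the identity becomes `w' ≤ -(m α / (n (n - 1))) r v`, i.e.
`(v ^ (m - 1))' ≥ (1 - m) α r / (n (n - 1))`. Integrating,
`v(r) ^ (m - 1) ≥ η ^ (m - 1) + α (1 - m) r ^ 2 / (2 n (n - 1))`, and both bounds follow by
inverting this. -/

open Set Real

lemma eqOn_Ici_of_hasDerivAt_eq {f g f' : ℝ → ℝ} {a : ℝ} (hf : ContinuousOn f (Ici a))
    (hg : ContinuousOn g (Ici a)) (hf' : ∀ x, a < x → HasDerivAt f (f' x) x)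
    (hg' : ∀ x, a < x → HasDerivAt g (f' x) x) (ha : f a = g a) : EqOn f g (Ici a) := by
  intro b (hb : a ≤ b)
  rcases hb.eq_or_lt with rfl | hab
  · exact ha
  obtain ⟨c, -, hc⟩ := exists_hasDerivAt_eq_slope (f - g) (fun _ => 0) hab
    ((hf.sub hg).mono Icc_subset_Ici_self)
    fun x hx => by simpa using (hf' x hx.1).sub (hg' x hx.1)
  have : f b - g b = f a - g a := by
    simpa [sub_eq_zero, (sub_pos.2 hab).ne'] using hc.symm
  linarith

lemma monotoneOn_Ici_sub_mul_sq {f f' : ℝ → ℝ} {c : ℝ} (hf : ContinuousOn f (Ici 0))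
    (hf' : ∀ x, 0 < x → HasDerivAt f (f' x) x) (hc : ∀ x, 0 < x → 2 * c * x ≤ f' x) :
    MonotoneOn (fun x => f x - c * x ^ 2) (Ici 0) := by
  refine monotoneOn_of_hasDerivWithinAt_nonneg (f' := fun x => f' x - c * (2 * x))
    (convex_Ici 0) (hf.sub (by fun_prop)) (fun x hx => ?_) fun x hx => ?_
  · rw [interior_Ici] at hx
    exact ((hf' x hx).sub ((hasDerivAt_pow 2 x).const_mul c)).hasDerivWithinAt.congr_deriv
      (by simp)
  · rw [interior_Ici] at hx
    linarith [hc x hx]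

lemma le_rpow_inv_of_le_rpow {x A p : ℝ} (hx : 0 < x) (hA : 0 < A) (hp : p < 0)
    (h : A ≤ x ^ p) : x ≤ A ^ p⁻¹ :=
  calc x = (x ^ p) ^ p⁻¹ := by rw [← rpow_mul hx.le, mul_inv_cancel₀ hp.ne, rpow_one]
    _ ≤ A ^ p⁻¹ := rpow_le_rpow_of_nonpos hA h (inv_nonpos.2 hp.le)

lemma hasDerivAt_pow_mul_deriv (k : ℕ) {w : ℝ → ℝ} {r : ℝ} (hr : r ≠ 0)
    (hw : DifferentiableAt ℝ (deriv w) r) :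
    HasDerivAt (fun s => s ^ k * deriv w s)
      (r ^ k * (deriv (deriv w) r + k / r * deriv w r)) r := by
  refine ((hasDerivAt_pow k r).mul hw.hasDerivAt).congr_deriv ?_
  rcases k with _ | k
  · simp
  · field_simp
    simp only [Nat.add_sub_cancel, pow_succ]
    push_cast
    ring

lemma differentiableAt_deriv_rpow_const {v : ℝ → ℝ} {x : ℝ} (hv : ContDiff ℝ 2 v) (hx : v x ≠ 0)
    (p : ℝ) : DifferentiableAt ℝ (deriv fun s => v s ^ p) x :=
  ((hv.contDiffAt.rpow_const_of_ne hx).derivWithin (m := 1) (by norm_num)).differentiableAt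
    (by norm_num)

noncomputable def radialMass (n : ℕ) (v : ℝ → ℝ) (r : ℝ) : ℝ :=
  ∫ s in (0 : ℝ)..r, s ^ (n - 1) * v s

lemma hasDerivAt_radialMass (n : ℕ) {v : ℝ → ℝ} (hv : Continuous v) (r : ℝ) :
    HasDerivAt (radialMass n v) (r ^ (n - 1) * v r) r := by
  have : Continuous fun s : ℝ => s ^ (n - 1) * v s := by fun_prop
  exact intervalIntegral.integral_hasDerivAt_right (this.intervalIntegrable _ _)
    (this.stronglyMeasurableAtFilter _ _) this.continuousAt

lemma radialMass_nonneg (n : ℕ) {v : ℝ → ℝ} {r : ℝ} (hr : 0 ≤ r) (hv : ∀ s ∈ Icc 0 r, 0 ≤ v s) :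
    0 ≤ radialMass n v r :=
  intervalIntegral.integral_nonneg hr fun s hs => mul_nonneg (pow_nonneg hs.1 _) (hv s hs)

lemma le_radialMass_of_antitoneOn {n : ℕ} (hn : n ≠ 0) {v : ℝ → ℝ} {r : ℝ} (hr : 0 ≤ r)
    (hv : Continuous v) (hanti : AntitoneOn v (Icc 0 r)) :
    v r * r ^ n / n ≤ radialMass n v r := by
  calc v r * r ^ n / n = ∫ s in (0 : ℝ)..r, s ^ (n - 1) * v r := by
        rw [intervalIntegral.integral_mul_const, integral_pow, Nat.sub_add_cancel (by omega),
          zero_pow hn, Nat.cast_sub (by omega)]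
        push_cast
        ring
    _ ≤ radialMass n v r := by
        refine intervalIntegral.integral_mono_on hr
          (Continuous.intervalIntegrable (by fun_prop) _ _)
          (Continuous.intervalIntegrable (by fun_prop) _ _) fun s hs => ?_
        exact mul_le_mul_of_nonneg_left (hanti hs ⟨hr, le_rfl⟩ hs.2) (pow_nonneg hs.1 _)

section RadialProfile

variable {n : ℕ} {m α β : ℝ} {v : ℝ → ℝ}

lemma hasDerivAt_rpow_of_pos {p x : ℝ} (hv : Differentiable ℝ v) (hx : 0 < v x) :
    HasDerivAt (fun s => v s ^ p) (deriv v x * p * v x ^ (p - 1)) x :=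
  (hv x).hasDerivAt.rpow_const (Or.inl hx.ne')

theorem radial_flux_eq (hn : 2 ≤ n) (hm : m ≠ 0) (hv : ContDiff ℝ 2 v)
    (hpos : ∀ r, 0 ≤ r → 0 < v r)
    (hode : ∀ r, 0 < r →
      ((n : ℝ) - 1) / m * (deriv (deriv (fun s => v s ^ m)) r
        + (((n : ℝ) - 1) / r) * deriv (fun s => v s ^ m) r)
      + α * v r + β * r * deriv v r = 0) {r : ℝ} (hr : 0 ≤ r) :
    r ^ (n - 1) * deriv (fun s => v s ^ m) r =
      -(m / (n - 1)) * (β * (r ^ n * v r) + (α - n * β) * radialMass n v r) := by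
  have hvd : Differentiable ℝ v := hv.differentiable (by norm_num)
  have hn1 : ((n - 1 : ℕ) : ℝ) = n - 1 := by push_cast [Nat.cast_sub (by omega : 1 ≤ n)]; ring
  have hn1' : (n : ℝ) - 1 ≠ 0 := by rw [← hn1]; exact_mod_cast (by omega : n - 1 ≠ 0)
  have hdw : ∀ x, 0 ≤ x → DifferentiableAt ℝ (deriv fun s => v s ^ m) x :=
    fun x hx => differentiableAt_deriv_rpow_const hv (hpos x hx).ne' m
  have hrhs : ∀ x, HasDerivAt
      (fun x => -(m / (n - 1)) * (β * (x ^ n * v x) + (α - n * β) * radialMass n v x))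
      (-(m / (n - 1)) * (x ^ (n - 1) * (α * v x + β * x * deriv v x))) x := by
    intro x
    refine ((((hasDerivAt_pow n x).mul (hvd x).hasDerivAt).const_mul β).add
      ((hasDerivAt_radialMass n hvd.continuous x).const_mul (α - n * β))).const_mul _
      |>.congr_deriv ?_
    obtain ⟨k, rfl⟩ : ∃ k, n = k + 1 := ⟨n - 1, by omega⟩
    simp only [Nat.add_sub_cancel, pow_succ]
    push_cast
    ring
  refine eqOn_Ici_of_hasDerivAt_eq (f := fun x => x ^ (n - 1) * deriv (fun s => v s ^ m) x)
    (fun x hx => ?_) (fun x _ => (hrhs x).continuousAt.continuousWithinAt) (fun x hx => ?_)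
    (fun x _ => hrhs x) ?_ hr
  · exact ((continuous_pow _).continuousAt.mul (hdw x hx).continuousAt).continuousWithinAt
  · refine (hasDerivAt_pow_mul_deriv (n - 1) hx.ne' (hdw x hx.le)).congr_deriv ?_
    have h := hode x hx
    rw [hn1]
    field_simp at h ⊢
    linear_combination h
  · simp [radialMass, zero_pow (by omega : n - 1 ≠ 0), zero_pow (by omega : n ≠ 0)]

theorem antitoneOn_of_radial_flux (hn : 2 ≤ n) (hm : 0 < m) (hβ : 0 ≤ β) (hαβ : n * β ≤ α)
    (hv : Differentiable ℝ v) (hpos : ∀ r, 0 ≤ r → 0 < v r)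
    (hflux : ∀ r, 0 ≤ r → r ^ (n - 1) * deriv (fun s => v s ^ m) r =
      -(m / (n - 1)) * (β * (r ^ n * v r) + (α - n * β) * radialMass n v r)) :
    AntitoneOn v (Ici 0) := by
  refine antitoneOn_of_deriv_nonpos (convex_Ici 0) hv.continuous.continuousOn
    hv.differentiableOn fun x hx => ?_
  rw [interior_Ici, mem_Ioi] at hx
  have hn1 : (0 : ℝ) < n - 1 := by
    have : (2 : ℝ) ≤ n := by exact_mod_cast hn
    linarith
  have hflux_nonpos : x ^ (n - 1) * deriv (fun s => v s ^ m) x ≤ 0 := by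
    rw [hflux x hx.le, neg_mul]
    refine neg_nonpos.2 (mul_nonneg (div_nonneg hm.le hn1.le) (add_nonneg ?_ ?_))
    · exact mul_nonneg hβ (mul_nonneg (pow_nonneg hx.le _) (hpos x hx.le).le)
    · exact mul_nonneg (by linarith) (radialMass_nonneg n hx.le fun s hs => (hpos s hs.1).le)
  rw [(hasDerivAt_rpow_of_pos hv (hpos x hx.le)).deriv] at hflux_nonpos
  have hvpow := rpow_pos_of_pos (hpos x hx.le) (m - 1)
  have hxpow := pow_pos hx (n - 1)
  by_contra! h
  nlinarith [mul_pos (mul_pos h hm) hvpow]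

theorem deriv_rpow_le_of_radial_flux (hn : 2 ≤ n) (hm : 0 < m) (hαβ : n * β ≤ α)
    (hv : Continuous v) (hanti : AntitoneOn v (Ici 0))
    (hflux : ∀ r, 0 ≤ r → r ^ (n - 1) * deriv (fun s => v s ^ m) r =
      -(m / (n - 1)) * (β * (r ^ n * v r) + (α - n * β) * radialMass n v r))
    {r : ℝ} (hr : 0 < r) :
    deriv (fun s => v s ^ m) r ≤ -(m * (α / (n * (n - 1)))) * r * v r := by
  have hn1 : (0 : ℝ) < n - 1 := by
    have : (2 : ℝ) ≤ n := by exact_mod_cast hn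
    linarith
  have hmass := le_radialMass_of_antitoneOn (by omega : n ≠ 0) hr.le hv
    (hanti.mono Icc_subset_Ici_self)
  have hrn : r ^ n = r ^ (n - 1) * r := by rw [← pow_succ, Nat.sub_add_cancel (by omega)]
  refine le_of_mul_le_mul_left ?_ (pow_pos hr (n - 1))
  have hgap : r ^ (n - 1) * (-(m * (α / (n * (n - 1)))) * r * v r) -
      r ^ (n - 1) * deriv (fun s => v s ^ m) r =
      m / (n - 1) * ((α - n * β) * (radialMass n v r - v r * r ^ n / n)) := by
    rw [hflux r hr.le, hrn]
    field_simp
    ring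
  have : 0 ≤ m / (n - 1) * ((α - n * β) * (radialMass n v r - v r * r ^ n / n)) :=
    mul_nonneg (div_nonneg hm.le hn1.le) (mul_nonneg (by linarith) (by linarith))
  linarith

theorem add_mul_sq_le_rpow_sub_one {K : ℝ} (hm : 0 < m) (hm1 : m < 1)
    (hv : Differentiable ℝ v) (hpos : ∀ r, 0 ≤ r → 0 < v r)
    (hderiv : ∀ r, 0 < r → deriv (fun s => v s ^ m) r ≤ -(m * K) * r * v r)
    {r : ℝ} (hr : 0 ≤ r) :
    v 0 ^ (m - 1) + (1 - m) * K / 2 * r ^ 2 ≤ v r ^ (m - 1) := by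
  have hslope : ∀ x, 0 < x →
      2 * ((1 - m) * K / 2) * x ≤ deriv v x * (m - 1) * v x ^ (m - 1 - 1) := by
    intro x hx
    have hvx := hpos x hx.le
    have h := hderiv x hx
    rw [(hasDerivAt_rpow_of_pos hv hvx).deriv, ← sub_add_cancel (m - 1) 1,
      rpow_add_one hvx.ne'] at h
    have h' : deriv v x * v x ^ (m - 1 - 1) ≤ -K * x := by
      refine le_of_mul_le_mul_left ?_ (mul_pos hm hvx)
      linarith
    nlinarith [mul_le_mul_of_nonneg_left h' (by linarith : (0 : ℝ) ≤ 1 - m)]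
  have hmono := monotoneOn_Ici_sub_mul_sq (f := fun s => v s ^ (m - 1))
    (fun x hx => (hv.continuous.continuousAt.rpow_const
      (Or.inl (hpos x hx).ne')).continuousWithinAt)
    (fun x hx => hasDerivAt_rpow_of_pos hv (hpos x hx.le)) hslope self_mem_Ici hr hr
  simp only at hmono
  linarith

end RadialProfile

theorem stmt_4_general (n : ℕ) (hn : 3 ≤ n) (m α β η : ℝ)
    (hm : 0 < m) (hm2 : m < ((n : ℝ) - 2) / n)
    (v : ℝ → ℝ) (hv : ContDiff ℝ 2 v) (hpos : ∀ r, 0 ≤ r → 0 < v r)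
    (hode : ∀ r, 0 < r →
      ((n : ℝ) - 1) / m * (deriv (deriv (fun s => v s ^ m)) r
        + (((n : ℝ) - 1) / r) * deriv (fun s => v s ^ m) r)
      + α * v r + β * r * deriv v r = 0)
    (hv0 : v 0 = η)
    (hβ : 0 < n * β) (hαβ : α ≥ n * β) :
    (∀ r, 0 < r →
      v r ≤ (η ^ (m - 1) + (α * (1 - m) / (2 * n * ((n : ℝ) - 1))) * r ^ 2) ^ (-(1 / (1 - m)))) ∧
    ∀ r, 1 ≤ r → r ^ 2 * v r ^ (1 - m) ≤ 2 * n * ((n : ℝ) - 1) / (α * (1 - m)) := by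
  have hN : (3 : ℝ) ≤ n := by exact_mod_cast hn
  have hm1 : m < 1 := hm2.trans (by rw [div_lt_one (by linarith)]; linarith)
  have hvd : Differentiable ℝ v := hv.differentiable (by norm_num)
  have hflux := fun r (hr : 0 ≤ r) => radial_flux_eq (by omega) hm.ne' hv hpos hode hr
  have hanti := antitoneOn_of_radial_flux (by omega) hm
    (nonneg_of_mul_nonneg_right hβ.le (by positivity)) hαβ hvd hpos hflux
  set c := α * (1 - m) / (2 * n * ((n : ℝ) - 1)) with hc_def
  have hc : 0 < c := div_pos (mul_pos (hβ.trans_le hαβ) (by linarith)) (by nlinarith)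
  have hη : 0 < η ^ (m - 1) := rpow_pos_of_pos (hv0 ▸ hpos 0 le_rfl) _
  have hlower (r : ℝ) (hr : 0 ≤ r) : η ^ (m - 1) + c * r ^ 2 ≤ v r ^ (m - 1) := by
    have := add_mul_sq_le_rpow_sub_one hm hm1 hvd hpos
      (fun _ hs => deriv_rpow_le_of_radial_flux (by omega) hm hαβ hvd.continuous hanti hflux hs) hr
    rwa [hv0, show (1 - m) * (α / (n * (n - 1))) / 2 = c by
      rw [hc_def, mul_div_assoc', div_div]; congr 1 <;> ring] at this
  refine ⟨fun r hr => ?_, fun r hr => ?_⟩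
  · rw [show -(1 / (1 - m)) = (m - 1)⁻¹ by rw [one_div, ← inv_neg, neg_sub]]
    exact le_rpow_inv_of_le_rpow (hpos r hr.le) (by positivity) (by linarith) (hlower r hr.le)
  · have hvr := hpos r (by linarith)
    calc r ^ 2 * v r ^ (1 - m) = c * r ^ 2 * v r ^ (1 - m) / c := by field_simp
      _ ≤ v r ^ (m - 1) * v r ^ (1 - m) / c := by gcongr; linarith [hlower r (by linarith)]
      _ = 2 * n * ((n : ℝ) - 1) / (α * (1 - m)) := by
        rw [← rpow_add hvr, sub_add_sub_cancel', sub_self, rpow_zero, hc_def, one_div_div]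

theorem stmt_4 (n : ℕ) (hn : 3 ≤ n) (m ρ α β η : ℝ)
    (hm : 0 < m) (hm2 : m < ((n : ℝ) - 2) / n) (hρ : 0 < ρ)
    (hα : α = (2 * β + ρ) / (1 - m)) (hη : 0 < η)
    (v : ℝ → ℝ) (hv : ContDiff ℝ 2 v) (hpos : ∀ r, 0 ≤ r → 0 < v r)
    (hode : ∀ r, 0 < r →
      ((n : ℝ) - 1) / m * (deriv (deriv (fun s => v s ^ m)) r
        + (((n : ℝ) - 1) / r) * deriv (fun s => v s ^ m) r)
      + α * v r + β * r * deriv v r = 0)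
    (hv0 : v 0 = η) (hv0d : deriv v 0 = 0)
    (hβ : 0 < n * β) (hαβ : α ≥ n * β) :
    (∀ r, 0 < r →
      v r ≤ (η ^ (m - 1) + (α * (1 - m) / (2 * n * ((n : ℝ) - 1))) * r ^ 2) ^ (-(1 / (1 - m)))) ∧
    ∀ r, 1 ≤ r → r ^ 2 * v r ^ (1 - m) ≤ 2 * n * ((n : ℝ) - 1) / (α * (1 - m)) :=
  stmt_4_general n hn m α β η hm hm2 v hv hpos hode hv0 hβ hαβ
end

section
/- Let v be a solution of the radial ODE ((n-1)/m)((v^m)'' + ((n-1)/r)(v^m)') + αv + βrv' = 0 on (0,∞), v > 0, with v(0) = η > 0 and v'(0) = 0, where α > 0, β ≠ 0, and mα/β ≤ n-2. Then v(r) + (β/α) r v'(r) > 0 for all r ≥ 0, and v'(r) < 0 for all r > 0. -/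
/-!
Write `w = v ^ m` and `μ = m α / β`. The flux `Φ = (t ^ μ w)' / μ` equals
`t ^ (μ - 1) v ^ (m - 1) (v + (β / α) t v')`, and the equation turns into
`Φ' = a Φ + (d - 2 - μ) t ^ (μ - 2) w` for an explicit `a` continuous on `(0, ∞)`. Hence `Φ' ≥ a Φ`
when `μ ≤ d - 2`, and an integrating factor carries the positivity of `Φ`, and so of
`v + (β / α) r v'`, from near `r = 0`, where it is close to `v 0 > 0`, to every `r > 0`.
Then `(r ^ (d - 1) w')' = -(m / (d - 1)) r ^ (d - 1) (α v + β r v') < 0` and `r ^ (d - 1) w'`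
vanishes at `0`, so `w' < 0`, that is `v' < 0`.
-/

open Real Set

theorem pos_of_mul_le_deriv {Q a : ℝ → ℝ} {x y : ℝ} (hxy : x ≤ y)
    (ha : ContinuousOn a (Icc x y)) (hQ : ∀ t ∈ Icc x y, DifferentiableAt ℝ Q t)
    (hQa : ∀ t ∈ Icc x y, a t * Q t ≤ deriv Q t) (hx : 0 < Q x) : 0 < Q y := by
  set A := fun t => ∫ s in x..t, a s
  have hA_cont : ContinuousOn A (Icc x y) := by
    simpa only [uIcc_of_le hxy] using
      intervalIntegral.continuousOn_primitive_interval' (ha.intervalIntegrable_of_Icc hxy)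
        left_mem_uIcc
  have hA_deriv (t : ℝ) (ht : t ∈ Ioo x y) : HasDerivAt A (a t) t :=
    intervalIntegral.integral_hasDerivAt_right
      ((ha.mono (Icc_subset_Icc le_rfl ht.2.le)).intervalIntegrable_of_Icc ht.1.le)
      ((ha.mono Ioo_subset_Icc_self).stronglyMeasurableAtFilter isOpen_Ioo t ht)
      (ha.continuousAt (Icc_mem_nhds ht.1 ht.2))
  have hmono : MonotoneOn (fun t => Q t * exp (-A t)) (Icc x y) := by
    refine monotoneOn_of_hasDerivWithinAt_nonneg
      (f' := fun t => (deriv Q t - a t * Q t) * exp (-A t)) (convex_Icc x y)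
      ((continuousOn_of_forall_continuousAt fun t ht => (hQ t ht).continuousAt).mul
        (hA_cont.neg.rexp)) (fun t ht => ?_) (fun t ht => ?_)
    · rw [interior_Icc] at ht
      exact (((hQ t (Ioo_subset_Icc_self ht)).hasDerivAt.mul
        (hA_deriv t ht).neg.exp).congr_deriv (by simp only [Pi.neg_apply]; ring)).hasDerivWithinAt
    · rw [interior_Icc] at ht
      exact mul_nonneg (sub_nonneg.2 (hQa t (Ioo_subset_Icc_self ht))) (exp_pos _).le
  have := hmono (left_mem_Icc.2 hxy) (right_mem_Icc.2 hxy) hxy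
  simp only [A, intervalIntegral.integral_same, neg_zero, exp_zero, mul_one] at this
  exact pos_of_mul_pos_left (hx.trans_le this) (exp_pos _).le

/-- The radial form of `((d - 1) / m) Δ(v ^ m) + α v + β x ⬝ ∇v = 0` in dimension `d`. -/
def IsRadialProfile (d m α β : ℝ) (v : ℝ → ℝ) : Prop :=
  ∀ r, 0 < r → (d - 1) / m * (deriv (deriv fun s => v s ^ m) r
    + ((d - 1) / r) * deriv (fun s => v s ^ m) r) + α * v r + β * r * deriv v r = 0

theorem differentiableAt_deriv_rpow {v : ℝ → ℝ} (hv : ContDiff ℝ 2 v) (m : ℝ) {t : ℝ}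
    (ht : 0 < v t) : DifferentiableAt ℝ (deriv fun s => v s ^ m) t := by
  have hU : IsOpen {s | 0 < v s} := isOpen_lt continuous_const hv.continuous
  have hw : ContDiffOn ℝ 2 (fun s => v s ^ m) {s | 0 < v s} :=
    hv.contDiffOn.rpow_const_of_ne fun s hs => hs.ne'
  exact ((hw.deriv_of_isOpen hU (by norm_num)).differentiableOn one_ne_zero t ht).differentiableAt
    (hU.mem_nhds ht)

theorem deriv_rpow_of_pos {v : ℝ → ℝ} {m t : ℝ} (hv : DifferentiableAt ℝ v t) (ht : 0 < v t) :
    deriv (fun s => v s ^ m) t = m * v t ^ (m - 1) * deriv v t  := by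
  rw [(hv.hasDerivAt.rpow_const (Or.inl ht.ne')).deriv]
  ring

/-- `(t ^ μ * v t ^ m)' / μ`. -/
noncomputable def radialFlux (v : ℝ → ℝ) (m μ t : ℝ) : ℝ :=
  t ^ (μ - 1) * v t ^ m + t ^ μ * deriv (fun s => v s ^ m) t / μ

theorem radialFlux_eq {v : ℝ → ℝ} {m α β t : ℝ} (hm : m ≠ 0) (hα : α ≠ 0)
    (ht : 0 < t) (hv : DifferentiableAt ℝ v t) (hvt : 0 < v t) :
    radialFlux v m (m * α / β) t
      = t ^ (m * α / β - 1) * v t ^ (m - 1) * (v t + β / α * t * deriv v t) := by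
  rw [radialFlux, deriv_rpow_of_pos hv hvt, rpow_sub_one hvt.ne', rpow_sub_one ht.ne']
  field_simp

namespace IsRadialProfile

variable {d m α β : ℝ} {v : ℝ → ℝ}

theorem deriv_deriv_rpow_add (h : IsRadialProfile d m α β v) (hd : d ≠ 1) (hm : m ≠ 0)
    {r : ℝ} (hr : 0 < r) :
    deriv (deriv fun s => v s ^ m) r + (d - 1) / r * deriv (fun s => v s ^ m) r
      = -(m / (d - 1)) * (α * v r + β * r * deriv v r) := by
  have hd' : d - 1 ≠ 0 := sub_ne_zero.2 hd
  have key : (d - 1) / m * (deriv (deriv fun s => v s ^ m) r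
      + (d - 1) / r * deriv (fun s => v s ^ m) r) = -(α * v r + β * r * deriv v r) := by
    linear_combination h r hr
  rw [neg_mul, ← mul_neg, ← key]
  field_simp

theorem hasDerivAt_radialFlux (h : IsRadialProfile d m α β v) (hv : ContDiff ℝ 2 v)
    (hd : d ≠ 1) (hm : m ≠ 0) (hα : α ≠ 0) (hβ : β ≠ 0) {t : ℝ} (ht : 0 < t) (hvt : 0 < v t) :
    HasDerivAt (radialFlux v m (m * α / β))
      (((2 * (m * α / β) - (d - 1)) / t - β / (d - 1) * t * v t ^ (1 - m))
          * radialFlux v m (m * α / β) t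
        + (d - 2 - m * α / β) * t ^ (m * α / β - 2) * v t ^ m) t := by
  set μ := m * α / β with hμ
  have hvd : DifferentiableAt ℝ v t := hv.differentiable (by norm_num) t
  have hw : HasDerivAt (fun s => v s ^ m) (deriv (fun s => v s ^ m) t) t :=
    (hvd.hasDerivAt.rpow_const (Or.inl hvt.ne')).differentiableAt.hasDerivAt
  have hw' := (differentiableAt_deriv_rpow hv m hvt).hasDerivAt
  have hpow (p : ℝ) : HasDerivAt (fun s => s ^ p) (p * t ^ (p - 1)) t :=
    hasDerivAt_rpow_const (Or.inl ht.ne')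
  refine (((hpow (μ - 1)).mul hw).add (((hpow μ).mul hw').div_const μ)).congr_deriv ?_
  rw [eq_sub_of_add_eq (h.deriv_deriv_rpow_add hd hm ht), radialFlux, deriv_rpow_of_pos hvd hvt,
    show μ - 1 - 1 = μ - 2 by ring, rpow_sub ht μ 2, rpow_two, rpow_sub_one ht.ne',
    rpow_sub_one hvt.ne', rpow_sub hvt, rpow_one]
  have hT : t ^ μ ≠ 0 := (rpow_pos_of_pos ht μ).ne'
  have hW : v t ^ m ≠ 0 := (rpow_pos_of_pos hvt m).ne'
  have hd' : d - 1 ≠ 0 := sub_ne_zero.2 hd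
  generalize t ^ μ = T at *
  generalize v t ^ m = W at *
  rw [hμ]
  field_simp
  ring

theorem add_mul_deriv_pos (h : IsRadialProfile d m α β v) (hv : ContDiff ℝ 2 v)
    (hpos : ∀ r, 0 ≤ r → 0 < v r) (hd : d ≠ 1) (hm : m ≠ 0) (hα : α ≠ 0) (hβ : β ≠ 0)
    (hαβ : m * α / β ≤ d - 2) {r : ℝ} (hr : 0 ≤ r) : 0 < v r + β / α * r * deriv v r := by
  set μ := m * α / β
  set f := fun r => v r + β / α * r * deriv v r
  rcases hr.eq_or_lt with rfl | hr
  · simpa using hpos 0 le_rfl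
  have hf : Continuous f :=
    hv.continuous.add ((continuous_const.mul continuous_id).mul (hv.continuous_deriv (by norm_num)))
  obtain ⟨x, hfx, hx, hxr⟩ : ∃ x, 0 < f x ∧ 0 < x ∧ x ≤ r := by
    have hf0 : 0 < f 0 := by simpa [f] using hpos 0 le_rfl
    exact (((continuousAt_const.eventually_lt hf.continuousAt hf0).filter_mono
      nhdsWithin_le_nhds).and (Ioc_mem_nhdsGT hr)).exists
  have hvt {t : ℝ} (ht : 0 < t) : 0 < v t := hpos t ht.le
  have hflux {t : ℝ} (ht : 0 < t) :
      radialFlux v m μ t = t ^ (μ - 1) * v t ^ (m - 1) * f t :=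
    radialFlux_eq hm hα ht (hv.differentiable (by norm_num) t) (hvt ht)
  have hweight {t : ℝ} (ht : 0 < t) : 0 < t ^ (μ - 1) * v t ^ (m - 1) :=
    mul_pos (rpow_pos_of_pos ht _) (rpow_pos_of_pos (hvt ht) _)
  have hIcc {t : ℝ} (ht : t ∈ Icc x r) : 0 < t := hx.trans_le ht.1
  have key : 0 < radialFlux v m μ r := by
    refine pos_of_mul_le_deriv hxr
      (a := fun t => (2 * μ - (d - 1)) / t - β / (d - 1) * t * v t ^ (1 - m))
      (fun t ht => ?_) (fun t ht => ?_) (fun t ht => ?_) ?_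
    · exact ((continuousAt_const.div continuousAt_id (hIcc ht).ne').sub
        ((continuousAt_const.mul continuousAt_id).mul
          (hv.continuous.continuousAt.rpow_const (Or.inl (hvt (hIcc ht)).ne')))).continuousWithinAt
    · exact (h.hasDerivAt_radialFlux hv hd hm hα hβ (hIcc ht) (hvt (hIcc ht))).differentiableAt
    · rw [(h.hasDerivAt_radialFlux hv hd hm hα hβ (hIcc ht) (hvt (hIcc ht))).deriv]
      have hsource : 0 ≤ (d - 2 - μ) * t ^ (μ - 2) * v t ^ m :=
        mul_nonneg (mul_nonneg (sub_nonneg.2 hαβ) (rpow_pos_of_pos (hIcc ht) _).le)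
          (rpow_pos_of_pos (hvt (hIcc ht)) m).le
      linarith
    · rw [hflux hx]
      exact mul_pos (hweight hx) hfx
  rw [hflux hr] at key
  exact pos_of_mul_pos_right key (hweight hr).le

theorem deriv_neg (h : IsRadialProfile d m α β v) (hv : ContDiff ℝ 2 v)
    (hpos : ∀ r, 0 ≤ r → 0 < v r) (hd : 1 < d) (hm : 0 < m) (hα : 0 < α)
    (hf : ∀ r, 0 < r → 0 < v r + β / α * r * deriv v r) {r : ℝ} (hr : 0 < r) :
    deriv v r < 0 := by
  set G := fun t => t ^ (d - 1) * deriv (fun s => v s ^ m) t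
  have hanti : StrictAntiOn G (Icc 0 r) := by
    refine strictAntiOn_of_deriv_neg (convex_Icc 0 r)
      ((continuous_rpow_const (by linarith)).continuousOn.mul fun t ht =>
        (differentiableAt_deriv_rpow hv m (hpos t ht.1)).continuousAt.continuousWithinAt)
      fun t ht => ?_
    rw [interior_Icc] at ht
    have ht0 : t ≠ 0 := ht.1.ne'
    have hG' : HasDerivAt G
        (-(t ^ (d - 1) * (m / (d - 1)) * α * (v t + β / α * t * deriv v t))) t := by
      refine ((hasDerivAt_rpow_const (Or.inl ht0)).mul
        (differentiableAt_deriv_rpow hv m (hpos t ht.1.le)).hasDerivAt).congr_deriv ?_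
      rw [rpow_sub_one ht0, eq_sub_of_add_eq (h.deriv_deriv_rpow_add hd.ne' hm.ne' ht.1)]
      field_simp
      ring
    rw [hG'.deriv, neg_neg_iff_pos]
    exact mul_pos (mul_pos (mul_pos (rpow_pos_of_pos ht.1 _) (div_pos hm (sub_pos.2 hd))) hα)
      (hf t ht.1)
  have hG0 : G 0 = 0 := by simp [G, zero_rpow (sub_ne_zero.2 hd.ne')]
  have hGr : G r < 0 := hG0 ▸ hanti ⟨le_rfl, hr.le⟩ ⟨hr.le, le_rfl⟩ hr
  rw [show G r = r ^ (d - 1) * deriv (fun s => v s ^ m) r from rfl,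
    deriv_rpow_of_pos (hv.differentiable (by norm_num) r) (hpos r hr.le), ← mul_assoc] at hGr
  exact neg_of_mul_neg_right hGr
    (mul_pos (rpow_pos_of_pos hr _) (mul_pos hm (rpow_pos_of_pos (hpos r hr.le) _))).le

end IsRadialProfile

theorem stmt_5_general (n : ℕ) (hn : 3 ≤ n) (m α β : ℝ)
    (hm : 0 < m)
    (v : ℝ → ℝ) (hv : ContDiff ℝ 2 v) (hpos : ∀ r, 0 ≤ r → 0 < v r)
    (hode : ∀ r, 0 < r →
      ((n : ℝ) - 1) / m * (deriv (deriv (fun s => v s ^ m)) r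
        + (((n : ℝ) - 1) / r) * deriv (fun s => v s ^ m) r)
      + α * v r + β * r * deriv v r = 0)
    (hα : 0 < α) (hβ : β ≠ 0) (hαβ : m * α / β ≤ (n : ℝ) - 2) :
    (∀ r, 0 ≤ r → v r + (β / α) * r * deriv v r > 0) ∧
    (∀ r, 0 < r → deriv v r < 0) := by
  have hprofile : IsRadialProfile n m α β v := hode
  have hd : (1 : ℝ) < n := by exact_mod_cast (by omega : 1 < n)
  have hpos_add (r : ℝ) (hr : 0 ≤ r) : 0 < v r + β / α * r * deriv v r :=
    hprofile.add_mul_deriv_pos hv hpos hd.ne' hm.ne' hα.ne' hβ hαβ hr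
  exact ⟨hpos_add, fun r hr =>
    hprofile.deriv_neg hv hpos hd hm hα (fun t ht => hpos_add t ht.le) hr⟩

theorem stmt_5 (n : ℕ) (hn : 3 ≤ n) (m α β η : ℝ)
    (hm : 0 < m) (hm2 : m < ((n : ℝ) - 2) / n) (hη : 0 < η)
    (v : ℝ → ℝ) (hv : ContDiff ℝ 2 v) (hpos : ∀ r, 0 ≤ r → 0 < v r)
    (hode : ∀ r, 0 < r →
      ((n : ℝ) - 1) / m * (deriv (deriv (fun s => v s ^ m)) r
        + (((n : ℝ) - 1) / r) * deriv (fun s => v s ^ m) r)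
      + α * v r + β * r * deriv v r = 0)
    (hv0 : v 0 = η) (hv0d : deriv v 0 = 0)
    (hα : 0 < α) (hβ : β ≠ 0) (hαβ : m * α / β ≤ (n : ℝ) - 2) :
    (∀ r, 0 ≤ r → v r + (β / α) * r * deriv v r > 0) ∧
    (∀ r, 0 < r → deriv v r < 0) :=
  stmt_5_general n hn m α β hm v hv hpos hode hα hβ hαβ
end

section
/- Let v be a solution of the radial ODE ((n-1)/m)((v^m)'' + ((n-1)/r)(v^m)') + αv + βrv' = 0 on (0,∞), v > 0, with v(0) = η > 0 and v'(0) = 0, where α > 0, β > 0, and mα/β < n-2. Then for all r > 0: -(n-2)/m < -α/β < r v'(r)/v(r) < 0. -/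
/-!
With `w = v ^ m` the equation reads `((n - 1) / m) r^(1 - n) (r^(n - 1) w')' = -g`, where
`g = α v + β r v'` is the scaling term. At `r = 0` we have `g = α v > 0`. At a first zero `r₀`
of `g`, eliminating `v''` through the equation and `v'` through `g(r₀) = 0` gives
`g'(r₀) · β r₀ v(r₀) = α v(r₀)² ((n - 2) β - m α) > 0`, so `g` would have to cross zero
upwards, which is impossible; hence `g > 0`, i.e. `r v' / v > -α / β`. Consequently the flux
`r^(n - 1) w'` vanishes at `0` and decreases, so `w' < 0` and therefore `v' < 0`.
-/

open Set Topology

theorem pos_of_deriv_pos_at_zeros {g : ℝ → ℝ} (hg : ContinuousOn g (Ici 0)) (h0 : 0 < g 0)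
    (hzero : ∀ r, 0 < r → g r = 0 → 0 < deriv g r) {r : ℝ} (hr : 0 < r) : 0 < g r := by
  by_contra! hgr
  set T := Icc 0 r ∩ g ⁻¹' Iic 0
  have hT : IsClosed T :=
    (hg.mono Icc_subset_Ici_self).preimage_isClosed_of_isClosed isClosed_Icc isClosed_Iic
  have hr₀T : sInf T ∈ T := hT.csInf_mem ⟨r, ⟨hr.le, le_rfl⟩, hgr⟩ ⟨0, fun x hx => hx.1.1⟩
  set r₀ := sInf T
  have hr₀ : 0 < r₀ := hr₀T.1.1.lt_of_ne fun h => h0.not_ge (h ▸ hr₀T.2)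
  have hbefore : ∀ x ∈ Ioo 0 r₀, 0 < g x := fun x hx => by
    by_contra! hgx
    exact hx.2.not_ge (csInf_le ⟨0, fun y hy => hy.1.1⟩ ⟨⟨hx.1.le, hx.2.le.trans hr₀T.1.2⟩, hgx⟩)
  have hleft : ∀ᶠ x in 𝓝[<] r₀, x ∈ Ioo 0 r₀ := Ioo_mem_nhdsLT hr₀
  have hgr₀ : g r₀ = 0 := by
    refine le_antisymm hr₀T.2 (ge_of_tendsto ?_ (hleft.mono fun x hx => (hbefore x hx).le))
    exact ((hg.continuousAt (Ici_mem_nhds hr₀)).tendsto).mono_left nhdsWithin_le_nhds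
  have hsign := eventually_nhdsWithin_sign_eq_of_deriv_pos (hzero r₀ hr₀ hgr₀) hgr₀
  obtain ⟨x, hx, hsx⟩ := (hleft.and (nhdsWithin_le_nhds hsign)).exists
  rw [sign_neg (sub_neg.2 hx.2), sign_eq_neg_one_iff] at hsx
  exact (hbefore x hx).not_gt hsx

theorem neg_of_hasDerivAt_add_div_mul_neg {p P : ℝ → ℝ} {k : ℕ} (hk : k ≠ 0) {R : ℝ}
    (hR : 0 < R) (hp : ContinuousOn p (Icc 0 R)) (hP : ∀ x ∈ Ioo 0 R, HasDerivAt p (P x) x)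
    (hneg : ∀ x ∈ Ioo 0 R, P x + k / x * p x < 0) : p R < 0 := by
  have hflux : StrictAntiOn (fun x => x ^ k * p x) (Icc 0 R) := by
    refine strictAntiOn_of_hasDerivWithinAt_neg (convex_Icc 0 R)
      ((continuousOn_pow k).mul hp) (f' := fun x => x ^ k * (P x + k / x * p x)) ?_ ?_
    · rw [interior_Icc]
      intro x hx
      refine (((hasDerivAt_pow k x).mul (hP x hx)).congr_deriv ?_).hasDerivWithinAt
      rw [← pow_sub_one_mul hk]
      field_simp [hx.1.ne']
      ring
    · rw [interior_Icc]
      exact fun x hx => mul_neg_of_pos_of_neg (pow_pos hx.1 k) (hneg x hx)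
  have := hflux (left_mem_Icc.2 hR.le) (right_mem_Icc.2 hR.le) hR
  simp only [zero_pow hk, zero_mul] at this
  exact neg_of_mul_neg_right this (pow_nonneg hR.le k)

section RpowComp

variable {v : ℝ → ℝ} {m x : ℝ}

theorem deriv_rpow_comp (hv : DifferentiableAt ℝ v x) (hx : 0 < v x) :
    deriv (fun s => v s ^ m) x = deriv v x * m * v x ^ (m - 1) :=
  (hv.hasDerivAt.rpow_const (Or.inl hx.ne')).deriv

theorem contDiffOn_deriv_rpow_comp (hv : ContDiff ℝ 2 v) :
    ContDiffOn ℝ 1 (deriv fun s => v s ^ m) {s | 0 < v s} := by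
  have hopen : IsOpen {s | 0 < v s} := isOpen_lt continuous_const hv.continuous
  refine ContDiffOn.deriv_of_isOpen (n := 2) (fun s hs => ?_) hopen (by norm_num)
  exact ((Real.contDiffAt_rpow_const_of_ne (ne_of_gt hs)).comp s hv.contDiffAt).contDiffWithinAt

theorem deriv_deriv_rpow_comp (hv : ContDiff ℝ 2 v) (hx : 0 < v x) :
    deriv (deriv fun s => v s ^ m) x =
      m * v x ^ (m - 2) * ((m - 1) * deriv v x ^ 2 + v x * deriv (deriv v) x) := by
  have hdv : Differentiable ℝ v := hv.differentiable (by norm_num)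
  have hddv : Differentiable ℝ (deriv v) := (hv.iterate_deriv' 1 1).differentiable one_ne_zero
  have hfirst : deriv (fun s => v s ^ m) =ᶠ[𝓝 x] fun s => deriv v s * m * v s ^ (m - 1) := by
    filter_upwards [(isOpen_lt continuous_const hdv.continuous).mem_nhds hx] with s hs
    exact deriv_rpow_comp (hdv s) hs
  have hsecond : HasDerivAt (fun s => deriv v s * m * v s ^ (m - 1))
      (deriv (deriv v) x * m * v x ^ (m - 1) +
        deriv v x * m * (deriv v x * (m - 1) * v x ^ (m - 1 - 1))) x :=
    ((hddv x).hasDerivAt.mul_const m).mul ((hdv x).hasDerivAt.rpow_const (Or.inl hx.ne'))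
  rw [hfirst.deriv_eq, hsecond.deriv, show m - 1 - 1 = m - 2 by ring,
    show m - 1 = m - 2 + 1 by ring, Real.rpow_add hx, Real.rpow_one]
  ring

end RpowComp

noncomputable def scalingTerm (α β : ℝ) (v : ℝ → ℝ) (r : ℝ) : ℝ :=
  α * v r + β * r * deriv v r

def IsRadialSolution (n : ℕ) (m α β : ℝ) (v : ℝ → ℝ) : Prop :=
  ∀ r, 0 < r →
    ((n : ℝ) - 1) / m * (deriv (deriv (fun s => v s ^ m)) r
      + (((n : ℝ) - 1) / r) * deriv (fun s => v s ^ m) r)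
    + α * v r + β * r * deriv v r = 0

namespace IsRadialSolution

variable {n : ℕ} {m α β : ℝ} {v : ℝ → ℝ}

theorem deriv_scalingTerm_pos_of_eq_zero (hode : IsRadialSolution n m α β v) (hm : 0 < m)
    (hα : 0 < α) (hβ : 0 < β) (hαβ : m * α / β < (n : ℝ) - 2) (hv : ContDiff ℝ 2 v)
    {r : ℝ} (hr : 0 < r) (hvr : 0 < v r) (hzero : scalingTerm α β v r = 0) :
    0 < deriv (scalingTerm α β v) r := by
  have hdv : Differentiable ℝ v := hv.differentiable (by norm_num)
  have hddv : Differentiable ℝ (deriv v) := (hv.iterate_deriv' 1 1).differentiable one_ne_zero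
  have hderiv : HasDerivAt (scalingTerm α β v)
      ((α + β) * deriv v r + β * r * deriv (deriv v) r) r := by
    refine (((hdv r).hasDerivAt.const_mul α).add
      (((hasDerivAt_id r).const_mul β).mul (hddv r).hasDerivAt)).congr_deriv ?_
    simp only [id, mul_one]
    ring
  rw [hderiv.deriv]
  unfold scalingTerm at hzero
  have hn : 0 < (n : ℝ) - 2 := (by positivity : 0 < m * α / β).trans hαβ
  have hradial := hode r hr
  rw [deriv_deriv_rpow_comp hv hvr, deriv_rpow_comp (hdv r) hvr,
    show m - 1 = m - 2 + 1 by ring, Real.rpow_add hvr, Real.rpow_one] at hradial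
  have hQ : (m - 1) * deriv v r ^ 2 * r + v r * deriv (deriv v) r * r
      + ((n : ℝ) - 1) * v r * deriv v r = 0 := by
    have hvm : 0 < v r ^ (m - 2) := Real.rpow_pos_of_pos hvr _
    have hfactored : ((n : ℝ) - 1) * v r ^ (m - 2) * ((m - 1) * deriv v r ^ 2 * r
        + v r * deriv (deriv v) r * r + ((n : ℝ) - 1) * v r * deriv v r) = 0 := by
      field_simp at hradial
      linear_combination hradial - r * hzero
    simpa [hvm.ne', show (n : ℝ) - 1 ≠ 0 by linarith] using hfactored
  have hkey : ((α + β) * deriv v r + β * r * deriv (deriv v) r) * (β * r * v r)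
      = α * v r ^ 2 * (((n : ℝ) - 2) * β - m * α) := by
    linear_combination (β ^ 2 * r) * hQ + ((α + β) * v r - (m - 1) * (β * r * deriv v r - α * v r)
      - ((n : ℝ) - 1) * β * v r) * hzero
  have hgap : 0 < ((n : ℝ) - 2) * β - m * α := by
    rw [div_lt_iff₀ hβ] at hαβ
    linarith
  have hrhs : 0 < α * v r ^ 2 * (((n : ℝ) - 2) * β - m * α) := by positivity
  exact pos_of_mul_pos_left (hkey ▸ hrhs) (by positivity)

theorem scalingTerm_pos (hode : IsRadialSolution n m α β v) (hm : 0 < m) (hα : 0 < α)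
    (hβ : 0 < β) (hαβ : m * α / β < (n : ℝ) - 2) (hv : ContDiff ℝ 2 v)
    (hpos : ∀ r, 0 ≤ r → 0 < v r) {r : ℝ} (hr : 0 < r) : 0 < scalingTerm α β v r := by
  refine pos_of_deriv_pos_at_zeros ?_ ?_ (fun s hs hzero =>
    hode.deriv_scalingTerm_pos_of_eq_zero hm hα hβ hαβ hv hs (hpos s hs.le) hzero) hr
  · have := hv.continuous
    have := hv.continuous_deriv one_le_two
    exact (by unfold scalingTerm; fun_prop : Continuous (scalingTerm α β v)).continuousOn
  · simpa [scalingTerm] using mul_pos hα (hpos 0 le_rfl)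

theorem deriv_neg (hode : IsRadialSolution n m α β v) (hn : 2 ≤ n) (hm : 0 < m)
    (hv : ContDiff ℝ 2 v) (hpos : ∀ r, 0 ≤ r → 0 < v r)
    (hg : ∀ r, 0 < r → 0 < scalingTerm α β v r) {R : ℝ} (hR : 0 < R) : deriv v R < 0 := by
  have hU : Ici 0 ⊆ {s | 0 < v s} := fun s hs => hpos s hs
  have hopen : IsOpen {s | 0 < v s} := isOpen_lt continuous_const hv.continuous
  have hw := contDiffOn_deriv_rpow_comp (m := m) hv
  have hcoef : 0 ≤ ((n : ℝ) - 1) / m := by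
    have : (2 : ℝ) ≤ n := by exact_mod_cast hn
    exact div_nonneg (by linarith) hm.le
  have hflux : deriv (fun s => v s ^ m) R < 0 := by
    refine neg_of_hasDerivAt_add_div_mul_neg (P := deriv (deriv fun s => v s ^ m)) (k := n - 1)
      (by omega) hR (hw.continuousOn.mono (Icc_subset_Ici_self.trans hU))
      (fun x hx => ?_) (fun x hx => ?_)
    · exact ((hw.differentiableOn one_ne_zero x (hU hx.1.le)).differentiableAt
        (hopen.mem_nhds (hU hx.1.le))).hasDerivAt
    · have hL := hode x hx.1
      have hgx := hg x hx.1
      unfold scalingTerm at hgx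
      rw [Nat.cast_pred (by omega)]
      exact neg_of_mul_neg_right (by linarith) hcoef
  rw [deriv_rpow_comp (hv.differentiable (by norm_num) R) (hpos R hR.le)] at hflux
  exact neg_of_mul_neg_left
    (neg_of_mul_neg_left hflux (Real.rpow_nonneg (hpos R hR.le).le _)) hm.le

end IsRadialSolution

theorem stmt_6_general (n : ℕ) (hn : 3 ≤ n) (m α β : ℝ)
    (hm : 0 < m)
    (v : ℝ → ℝ) (hv : ContDiff ℝ 2 v) (hpos : ∀ r, 0 ≤ r → 0 < v r)
    (hode : ∀ r, 0 < r →
      ((n : ℝ) - 1) / m * (deriv (deriv (fun s => v s ^ m)) r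
        + (((n : ℝ) - 1) / r) * deriv (fun s => v s ^ m) r)
      + α * v r + β * r * deriv v r = 0)
    (hα : 0 < α) (hβ : 0 < β) (hαβ : m * α / β < (n : ℝ) - 2) :
    ∀ r, 0 < r →
      -(((n : ℝ) - 2) / m) < -(α / β) ∧
      -(α / β) < r * deriv v r / v r ∧
      r * deriv v r / v r < 0 := by
  intro r hr
  have hsol : IsRadialSolution n m α β v := hode
  have hg := fun s => hsol.scalingTerm_pos (r := s) hm hα hβ hαβ hv hpos
  have hv' := hsol.deriv_neg (by omega) hm hv hpos hg hr
  have hvr := hpos r hr.le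
  refine ⟨neg_lt_neg ?_, ?_, div_neg_of_neg_of_pos (mul_neg_of_pos_of_neg hr hv') hvr⟩
  · rw [lt_div_iff₀ hm]
    linarith [show α / β * m = m * α / β by ring]
  · have hquot : r * deriv v r / v r + α / β = scalingTerm α β v r / (β * v r) := by
      unfold scalingTerm
      field_simp
      ring
    linarith [div_pos (hg r hr) (mul_pos hβ hvr)]

theorem stmt_6 (n : ℕ) (hn : 3 ≤ n) (m α β η : ℝ)
    (hm : 0 < m) (hm2 : m < ((n : ℝ) - 2) / n) (hη : 0 < η)
    (v : ℝ → ℝ) (hv : ContDiff ℝ 2 v) (hpos : ∀ r, 0 ≤ r → 0 < v r)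
    (hode : ∀ r, 0 < r →
      ((n : ℝ) - 1) / m * (deriv (deriv (fun s => v s ^ m)) r
        + (((n : ℝ) - 1) / r) * deriv (fun s => v s ^ m) r)
      + α * v r + β * r * deriv v r = 0)
    (hv0 : v 0 = η) (hv0d : deriv v 0 = 0)
    (hα : 0 < α) (hβ : 0 < β) (hαβ : m * α / β < (n : ℝ) - 2) :
    ∀ r, 0 < r →
      -(((n : ℝ) - 2) / m) < -(α / β) ∧
      -(α / β) < r * deriv v r / v r ∧
      r * deriv v r / v r < 0 :=
  stmt_6_general n hn m α β hm v hv hpos hode hα hβ hαβ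
end

section
/- Let v be a solution of the radial ODE ((n-1)/m)((v^m)'' + ((n-1)/r)(v^m)') + αv + βrv' = 0 on (0,∞), v > 0, with v(0) = η > 0, v'(0) = 0, where 0 < α ≤ nβ and β > mρ/(n-2-mn). Then there exists C₁ > 0 such that r² v(r)^(1-m) ≤ C₁ for all r ≥ 1. -/
/-!
With `X = r² v^(1-m)` and `U = -r v'/v`, the radial equation becomes the autonomous planar
system `r X' = X (2 - (1-m) U)`, `r U' = (α - β U) X / (n-1) - (n-2) U + m U²`.
Writing the equation in divergence form, `r^(n-1) (v^m)'` vanishes at `0` and decreases while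
positive, so `v' ≤ 0` and `U ≥ 0`. Since `(1-m) α = 2β + ρ > 2β`, there is a threshold `u` with
`(1-m) u > 2` and `α > β u`: above it `X` decreases, below it `X - c U` decreases once `X` is
large, for a suitable `c > 0`. Hence `max (X - c U) (X - c u)` can never cross a large level,
which bounds `X`.
-/

open Filter Topology Set

theorem eventually_lt_of_hasDerivAt_neg {f : ℝ → ℝ} {f' x : ℝ} (hf : HasDerivAt f f' x)
    (hf' : f' < 0) : ∀ᶠ z in 𝓝[>] x, f z < f x := by
  filter_upwards [(hf.hasDerivWithinAt (s := Ioi x)).limsup_slope_le' (lt_irrefl x) hf',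
    self_mem_nhdsWithin] with z hslope (hxz : x < z)
  rw [slope_def_field, div_neg_iff] at hslope
  rcases hslope with ⟨_, h⟩ | ⟨h, _⟩ <;> linarith

theorem eventually_max_lt_of_hasDerivAt {f g : ℝ → ℝ} {f' g' x : ℝ} (hf : HasDerivAt f f' x)
    (hg : HasDerivAt g g' x) (hf' : g x ≤ f x → f' < 0) (hg' : f x ≤ g x → g' < 0) :
    ∀ᶠ z in 𝓝[>] x, max (f z) (g z) < max (f x) (g x) := by
  have branch : ∀ {φ ψ : ℝ → ℝ} {φ' : ℝ}, HasDerivAt φ φ' x → (ψ x ≤ φ x → φ' < 0) →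
      ∀ᶠ z in 𝓝[>] x, φ z < max (φ x) (ψ x) := by
    intro φ ψ φ' hφ hφ'
    by_cases hψφ : ψ x ≤ φ x
    · rw [max_eq_left hψφ]
      exact eventually_lt_of_hasDerivAt_neg hφ (hφ' hψφ)
    · rw [max_eq_right (not_le.mp hψφ).le]
      exact nhdsWithin_le_nhds (hφ.continuousAt.eventually_lt continuousAt_const (not_le.mp hψφ))
  filter_upwards [branch hf hf', branch hg hg'] with z hfz hgz
  exact max_lt hfz (max_comm (g x) (f x) ▸ hgz)

theorem image_le_of_eq_imp_eventually_lt {f : ℝ → ℝ} {a b K : ℝ} (hf : ContinuousOn f (Icc a b))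
    (ha : f a ≤ K) (hK : ∀ x ∈ Ico a b, f x = K → ∀ᶠ z in 𝓝[>] x, f z < K) :
    ∀ x ∈ Icc a b, f x ≤ K := by
  refine IsClosed.Icc_subset_of_forall_mem_nhdsWithin (s := {x | f x ≤ K}) ?_ ha ?_
  · rw [inter_comm]
    exact hf.preimage_isClosed_of_isClosed isClosed_Icc isClosed_Iic
  · rintro x ⟨hxK, hx⟩
    rcases (show f x ≤ K from hxK).lt_or_eq with hlt | heq
    · have hcont : ContinuousWithinAt f (Ioi x) x :=
        (hf x (Ico_subset_Icc_self hx)).mono_of_mem_nhdsWithin (mem_of_superset (Ioo_mem_nhdsGT hx.2)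
          (Ioo_subset_Icc_self.trans (Icc_subset_Icc_left hx.1)))
      filter_upwards [hcont.tendsto.eventually_lt_const hlt] with z hz using hz.le
    · filter_upwards [hK x hx heq] with z hz using hz.le

theorem nonpos_of_deriv_nonpos_of_pos {f : ℝ → ℝ} {a b : ℝ}
    (hf : ∀ x ∈ Icc a b, DifferentiableAt ℝ f x) (ha : f a ≤ 0)
    (hderiv : ∀ x ∈ Ioo a b, 0 < f x → deriv f x ≤ 0) : ∀ x ∈ Icc a b, f x ≤ 0 := by
  intro x hx
  refine le_of_forall_pos_le_add fun ε hε => ?_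
  have hB : ∀ t, HasDerivAt (fun t => ε * Real.exp (t - b)) (ε * Real.exp (t - b)) t := fun t => by
    simpa using ((Real.hasDerivAt_exp _).comp t ((hasDerivAt_id t).sub_const b)).const_mul ε
  have hle := image_le_of_deriv_right_lt_deriv_boundary (f' := deriv f)
    (fun t ht => (hf t ht).continuousAt.continuousWithinAt)
    (fun t ht => (hf t (Ico_subset_Icc_self ht)).hasDerivAt.hasDerivWithinAt)
    (ha.trans (by positivity)) hB ?_ hx
  · calc f x ≤ ε * Real.exp (x - b) := hle
      _ ≤ ε * 1 := by gcongr; exact Real.exp_le_one_iff.mpr (by linarith [hx.2])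
      _ = 0 + ε := by ring
  · rintro t ⟨hat, htb⟩ hft
    rcases hat.eq_or_lt with rfl | hat
    · have : 0 < ε * Real.exp (a - b) := by positivity
      linarith
    · exact (hderiv t ⟨hat, htb⟩ (hft ▸ by positivity)).trans_lt (by positivity)

theorem lyapunov_numerator_neg {a A B p q c u X U : ℝ} (ha : 0 ≤ a) (hB : 0 ≤ B) (hp : 0 ≤ p)
    (hq : 0 ≤ q) (hc : 0 ≤ c) (hcu : c * (A - B * u) = 3) (hU : 0 ≤ U) (hUu : U ≤ u)
    (hX : c * p * u < X) :
    X * (2 - a * U) - c * ((A - B * U) * X - p * U + q * U ^ 2) < 0 := by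
  have hX0 : 0 ≤ X := by nlinarith [mul_nonneg (mul_nonneg hc hp) (hU.trans hUu)]
  have h1 : X * (2 - a * U) ≤ 2 * X := by nlinarith [mul_nonneg hX0 (mul_nonneg ha hU)]
  have h2 : (A - B * u) * X ≤ (A - B * U) * X := by
    nlinarith [mul_nonneg (mul_nonneg hB (sub_nonneg.2 hUu)) hX0]
  have h3 : c * p * U ≤ c * p * u := by gcongr
  have h4 : 0 ≤ c * q * U ^ 2 := by positivity
  nlinarith

theorem exists_bound_of_hasDerivAt_system {a A B p q : ℝ} (ha : 0 < a) (hB : 0 < B)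
    (hp : 0 ≤ p) (hq : 0 ≤ q) (hAB : 2 * B < a * A) {X U : ℝ → ℝ}
    (hX : ∀ r, 1 ≤ r → HasDerivAt X (X r * (2 - a * U r) / r) r)
    (hU : ∀ r, 1 ≤ r → HasDerivAt U (((A - B * U r) * X r - p * U r + q * U r ^ 2) / r) r)
    (hXpos : ∀ r, 1 ≤ r → 0 < X r) (hUnonneg : ∀ r, 1 ≤ r → 0 ≤ U r) :
    ∃ C > 0, ∀ r, 1 ≤ r → X r ≤ C := by
  obtain ⟨u, hau, huB⟩ : ∃ u, 2 / a < u ∧ u < A / B :=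
    exists_between (by rw [div_lt_div_iff₀ ha hB]; linarith)
  rw [div_lt_iff₀' ha] at hau
  rw [lt_div_iff₀ hB] at huB
  have hu : 0 < u := by nlinarith
  set c := 3 / (A - B * u)
  have hc : 0 < c := div_pos (by norm_num) (by linarith)
  have hcδ : c * (A - B * u) = 3 := div_mul_cancel₀ _ (by linarith)
  set K := X 1 + c * p * u + 1
  have hcpu : 0 ≤ c * p * u := by positivity
  have hWX : ∀ r, 1 ≤ r → max (X r - c * U r) (X r - c * u) ≤ X r := fun r hr =>
    max_le (by nlinarith [hUnonneg r hr]) (by nlinarith)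
  have hW : ∀ R, 1 ≤ R → max (X R - c * U R) (X R - c * u) ≤ K := by
    intro R hR
    refine image_le_of_eq_imp_eventually_lt (f := fun r => max (X r - c * U r) (X r - c * u))
      ?_ ?_ ?_ R ⟨hR, le_rfl⟩
    · intro x hx
      have := (hX x hx.1).continuousAt
      have := (hU x hx.1).continuousAt
      exact ContinuousAt.continuousWithinAt (by fun_prop)
    · linarith [hWX 1 le_rfl, hXpos 1 le_rfl]
    · intro x hx hWx
      have hx0 : 0 < x := by linarith [hx.1]
      have hXx : c * p * u < X x := by linarith [hWX x hx.1, hXpos 1 le_rfl]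
      rw [← hWx]
      refine eventually_max_lt_of_hasDerivAt ((hX x hx.1).sub ((hU x hx.1).const_mul c))
        ((hX x hx.1).sub_const _) (fun hle => ?_) (fun hge => ?_)
      · rw [← mul_div_assoc, ← sub_div]
        exact div_neg_of_neg_of_pos (lyapunov_numerator_neg ha.le hB.le hp hq hc.le hcδ
          (hUnonneg x hx.1) (le_of_mul_le_mul_left (by linarith) hc) hXx) hx0
      · have hUu : u ≤ U x := le_of_mul_le_mul_left (by linarith) hc
        exact div_neg_of_neg_of_pos (mul_neg_of_pos_of_neg (hXpos x hx.1) (by nlinarith)) hx0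
  refine ⟨K + c * u, by have := hXpos 1 le_rfl; positivity, fun r hr => ?_⟩
  linarith [hW r hr, le_max_right (X r - c * U r) (X r - c * u)]

def SolvesRadialEq (n : ℕ) (m α β : ℝ) (v : ℝ → ℝ) : Prop :=
  ∀ r, 0 < r →
    ((n : ℝ) - 1) / m * (deriv (deriv (fun s => v s ^ m)) r
      + (((n : ℝ) - 1) / r) * deriv (fun s => v s ^ m) r)
    + α * v r + β * r * deriv v r = 0

noncomputable def scaledPower (m : ℝ) (v : ℝ → ℝ) (r : ℝ) : ℝ := r ^ 2 * v r ^ (1 - m)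

noncomputable def decayRate (v : ℝ → ℝ) (r : ℝ) : ℝ := -(r * deriv v r) / v r

section RadialEquation

variable {n : ℕ} {m α β : ℝ} {v : ℝ → ℝ}

theorem eventually_deriv_rpow_comp (hv : Differentiable ℝ v) {r : ℝ} (hvr : 0 < v r) :
    (deriv fun s => v s ^ m) =ᶠ[𝓝 r] fun s => deriv v s * m * v s ^ (m - 1) := by
  filter_upwards [hv.continuous.continuousAt.eventually_const_lt hvr] with s hs
  exact ((hv s).hasDerivAt.rpow_const (Or.inl hs.ne')).deriv

theorem differentiableAt_deriv_rpow_comp (hv : ContDiff ℝ 2 v) {r : ℝ} (hvr : 0 < v r) :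
    DifferentiableAt ℝ (deriv fun s => v s ^ m) r := by
  have hd : Differentiable ℝ v := hv.differentiable (by norm_num)
  exact ((hv.differentiable_deriv_two r).mul_const m |>.mul
    ((hd r).rpow_const (Or.inl hvr.ne'))).congr_of_eventuallyEq (eventually_deriv_rpow_comp hd hvr)

theorem deriv_nonpos_of_solvesRadialEq (hn : 2 ≤ n) (hm : 0 < m) (hα : 0 < α) (hβ : 0 ≤ β)
    (hv : ContDiff ℝ 2 v) (hpos : ∀ r, 0 ≤ r → 0 < v r) (hode : SolvesRadialEq n m α β v)
    {r : ℝ} (hr : 0 < r) : deriv v r ≤ 0 := by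
  obtain ⟨k, rfl⟩ : ∃ k, n = k + 2 := ⟨n - 2, by omega⟩
  set w := fun s => v s ^ m
  have hd : Differentiable ℝ v := hv.differentiable (by norm_num)
  have hw' : ∀ s, 0 ≤ s → deriv w s = deriv v s * (m * v s ^ (m - 1)) := fun s hs => by
    rw [((hd s).hasDerivAt.rpow_const (Or.inl (hpos s hs).ne')).deriv]; ring
  have hmv : ∀ s, 0 ≤ s → 0 < m * v s ^ (m - 1) := fun s hs => by
    have := hpos s hs; positivity
  -- the flux `s ^ (n - 1) * (v ^ m)'` vanishes at `0` and can only decrease while positive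
  have hflux : ∀ s ∈ Icc 0 r, s ^ (k + 1) * deriv w s ≤ 0 := by
    refine nonpos_of_deriv_nonpos_of_pos (fun s hs => ?_) (by simp) ?_
    · exact (differentiableAt_pow _).mul (differentiableAt_deriv_rpow_comp hv (hpos s hs.1))
    · intro s hs hflux_pos
      have hs0 := hs.1
      have hws : 0 < deriv w s := pos_of_mul_pos_right hflux_pos (by positivity)
      have hvs : 0 < deriv v s := pos_of_mul_pos_left (hw' s hs0.le ▸ hws) (hmv s hs0.le).le
      have hbracket : deriv (deriv w) s + ((k + 2 : ℕ) - 1 : ℝ) / s * deriv w s < 0 := by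
        have : 0 < α * v s + β * s * deriv v s := add_pos_of_pos_of_nonneg
          (mul_pos hα (hpos s hs0.le)) (mul_nonneg (mul_nonneg hβ hs0.le) hvs.le)
        have hNm : 0 < ((k + 2 : ℕ) - 1 : ℝ) / m :=
          div_pos (by push_cast; linarith [k.cast_nonneg' (α := ℝ)]) hm
        nlinarith [hode s hs0]
      have hD : HasDerivAt (fun s => s ^ (k + 1) * deriv w s) _ s := (hasDerivAt_pow (k + 1) s).mul
        (differentiableAt_deriv_rpow_comp hv (hpos s hs0.le)).hasDerivAt
      rw [hD.deriv]
      have : ((k + 1 : ℕ) : ℝ) * s ^ (k + 1 - 1) * deriv w s + s ^ (k + 1) * deriv (deriv w) s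
          = s ^ (k + 1) * (deriv (deriv w) s + ((k + 2 : ℕ) - 1 : ℝ) / s * deriv w s) := by
        push_cast
        field_simp
        ring
      rw [this]
      exact mul_nonpos_of_nonneg_of_nonpos (by positivity) hbracket.le
  have hwr : deriv w r ≤ 0 := nonpos_of_mul_nonpos_right (hflux r ⟨hr.le, le_rfl⟩) (by positivity)
  exact nonpos_of_mul_nonpos_left (hw' r hr.le ▸ hwr) (hmv r hr.le)

theorem hasDerivAt_scaledPower {r : ℝ} (hv : DifferentiableAt ℝ v r) (hvr : 0 < v r) :
    HasDerivAt (scaledPower m v) (scaledPower m v r * (2 - (1 - m) * decayRate v r) / r) r := by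
  refine ((hasDerivAt_pow 2 r).mul
    (hv.hasDerivAt.rpow_const (p := 1 - m) (Or.inl hvr.ne'))).congr_deriv ?_
  rw [Real.rpow_sub_one hvr.ne']
  simp only [scaledPower, decayRate]
  field_simp
  ring

theorem hasDerivAt_decayRate (hn : 2 ≤ n) (hm : m ≠ 0) (hv : ContDiff ℝ 2 v)
    (hode : SolvesRadialEq n m α β v) {r : ℝ} (hr : 0 < r) (hvr : 0 < v r) :
    HasDerivAt (decayRate v) (((α / (n - 1) - β / (n - 1) * decayRate v r) * scaledPower m v r
      - (n - 2) * decayRate v r + m * decayRate v r ^ 2) / r) r := by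
  set w := fun s => v s ^ m
  have hd : Differentiable ℝ v := hv.differentiable (by norm_num)
  have hN : (n : ℝ) - 1 ≠ 0 := by
    have : (2 : ℝ) ≤ n := by exact_mod_cast hn
    linarith
  have hw'r : deriv w r = deriv v r * m * (v r ^ m / v r) := by
    rw [(eventually_deriv_rpow_comp hd hvr).self_of_nhds]
    dsimp only
    rw [Real.rpow_sub_one hvr.ne']
  have hw''r : deriv (deriv w) r = -(((n : ℝ) - 1) / r) * deriv w r
      - m / ((n : ℝ) - 1) * (α * v r + β * r * deriv v r) := by
    have h := hode r hr
    field_simp at h ⊢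
    linear_combination h
  have heq : decayRate v =ᶠ[𝓝 r] fun s => -(s * deriv w s) / (m * w s) := by
    filter_upwards [hd.continuous.continuousAt.eventually_const_lt hvr,
      eventually_deriv_rpow_comp (m := m) hd hvr] with s hs hws
    simp only [decayRate, w, hws, Real.rpow_sub_one hs.ne']
    field_simp
  have hwr : 0 < w r := by positivity
  refine ((((hasDerivAt_id r).mul (differentiableAt_deriv_rpow_comp hv hvr).hasDerivAt).neg.div
    (HasDerivAt.const_mul m ((hd r).hasDerivAt.rpow_const (p := m) (Or.inl hvr.ne')))
      (by positivity)).congr_of_eventuallyEq heq).congr_deriv ?_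
  simp only [Pi.neg_apply, Pi.mul_apply, id]
  rw [hw''r, hw'r, Real.rpow_sub_one hvr.ne']
  simp only [decayRate, scaledPower, Real.rpow_sub hvr, Real.rpow_one]
  field_simp
  ring

end RadialEquation

theorem stmt_15_general (n : ℕ) (hn : 3 ≤ n) (m ρ α β : ℝ)
    (hm : 0 < m) (hm2 : m < ((n : ℝ) - 2) / n) (hρ : 0 < ρ)
    (hα : α = (2 * β + ρ) / (1 - m))
    (v : ℝ → ℝ) (hv : ContDiff ℝ 2 v) (hpos : ∀ r, 0 ≤ r → 0 < v r)
    (hode : ∀ r, 0 < r →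
      ((n : ℝ) - 1) / m * (deriv (deriv (fun s => v s ^ m)) r
        + (((n : ℝ) - 1) / r) * deriv (fun s => v s ^ m) r)
      + α * v r + β * r * deriv v r = 0)
    (hβ : β > m * ρ / ((n : ℝ) - 2 - m * n)) (hα0 : 0 < α) :
    ∃ C₁ > 0, ∀ r, 1 ≤ r → r ^ 2 * v r ^ (1 - m) ≤ C₁ := by
  have hn3 : (3 : ℝ) ≤ n := by exact_mod_cast hn
  have hmn : m * n < n - 2 := by rwa [lt_div_iff₀ (by linarith)] at hm2
  have hm1 : m < 1 := by nlinarith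
  have hβ0 : 0 < β := lt_trans (div_pos (mul_pos hm hρ) (by linarith)) hβ
  have hN : (0 : ℝ) < n - 1 := by linarith
  have hαβ : 2 * (β / (n - 1)) < (1 - m) * (α / (n - 1)) := by
    have : (1 - m) * α = 2 * β + ρ := by rw [hα]; field_simp [(sub_pos.2 hm1).ne']
    rw [mul_div_assoc', mul_div_assoc', this]
    exact div_lt_div_of_pos_right (by linarith) hN
  have hv1 : Differentiable ℝ v := hv.differentiable (by norm_num)
  have hvr : ∀ r : ℝ, 1 ≤ r → 0 < v r := fun r hr => hpos r (by linarith)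
  exact exists_bound_of_hasDerivAt_system (sub_pos.2 hm1) (div_pos hβ0 hN) (by linarith) hm.le hαβ
    (fun r hr => hasDerivAt_scaledPower (hv1 r) (hvr r hr))
    (fun r hr => hasDerivAt_decayRate (by omega) hm.ne' hv hode (by linarith) (hvr r hr))
    (fun r hr => by have := hvr r hr; positivity)
    (fun r hr => div_nonneg (neg_nonneg.2 (mul_nonpos_of_nonneg_of_nonpos (by linarith)
      (deriv_nonpos_of_solvesRadialEq (by omega) hm hα0 hβ0.le hv hpos hode (by linarith))))
      (hvr r hr).le)

theorem stmt_15 (n : ℕ) (hn : 3 ≤ n) (m ρ α β η : ℝ)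
    (hm : 0 < m) (hm2 : m < ((n : ℝ) - 2) / n) (hρ : 0 < ρ)
    (hα : α = (2 * β + ρ) / (1 - m)) (hη : 0 < η)
    (v : ℝ → ℝ) (hv : ContDiff ℝ 2 v) (hpos : ∀ r, 0 ≤ r → 0 < v r)
    (hode : ∀ r, 0 < r →
      ((n : ℝ) - 1) / m * (deriv (deriv (fun s => v s ^ m)) r
        + (((n : ℝ) - 1) / r) * deriv (fun s => v s ^ m) r)
      + α * v r + β * r * deriv v r = 0)
    (hv0 : v 0 = η) (hv0d : deriv v 0 = 0)
    (hβ : β > m * ρ / ((n : ℝ) - 2 - m * n)) (hα0 : 0 < α) (hαβ : α ≤ n * β) :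
    ∃ C₁ > 0, ∀ r, 1 ≤ r → r ^ 2 * v r ^ (1 - m) ≤ C₁ :=
  stmt_15_general n hn m ρ α β hm hm2 hρ hα v hv hpos hode hβ hα0
end

section
/- Suppose the radial solution v of the ODE satisfies r² v(r)^(1-m) ≤ C₁ for all r ≥ 1, and ∫₀^∞ z^(n-1) v(z) dz < ∞ with β ≤ 0. Then r² v(r)^(1-m) → 0 as r → ∞ along any convergent subsequence; i.e., every subsequential limit of w(r) = r² v(r)^(1-m) as r → ∞ equals 0. -/
/-!
The flux `H(t) = (n-1) t^(n-1) (v^m)'(t) + m β t^n v(t)` of the radial equation satisfies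
`H' = m (nβ - α) t^(n-1) v`, which is integrable, so `H` is bounded on `[1, ∞)`. Together with the
decay `v(r) ≤ C r^(-q)`, `q = 2/(1-m)`, forced by `r² v^(1-m) ≤ C₁`, and `q < n`, this gives
`|(v^m)'(r)| ≤ C r^(1-q)`. If `r_i² v(r_i)^(1-m) → L > 0`, then `v^m ≥ c r_i^(2-q)` at `r_i`, and the
derivative bound keeps `v^m` of that size on `[r_i, (1+ε) r_i]` for a fixed small `ε`. There
`v ≥ c' r_i^(-q)`, so the mass `∫ s^(n-1) v` over these intervals stays above a positive constant,
contradicting the integrability of `s^(n-1) v`.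
-/

open Filter Topology MeasureTheory Set

namespace Real

theorem mul_rpow_neg_rpow {c x : ℝ} (hc : 0 ≤ c) (hx : 0 ≤ x) (q e : ℝ) :
    (c * x ^ (-q)) ^ e = c ^ e * x ^ (-(q * e)) := by
  rw [mul_rpow hc (rpow_nonneg hx _), ← rpow_mul hx, neg_mul]

theorem mul_rpow_neg_le_iff {c x V q e : ℝ} (hc : 0 ≤ c) (hx : 0 < x) (hV : 0 ≤ V) (he : 0 < e) :
    c * x ^ (-q) ≤ V ↔ c ^ e * x ^ (-(q * e)) ≤ V ^ e := by
  rw [← mul_rpow_neg_rpow hc hx.le,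
    rpow_le_rpow_iff (mul_nonneg hc (rpow_nonneg hx.le _)) hV he]

theorem rpow_inv_mul_rpow_neg_rpow_mul_sq {C y p : ℝ} (hC : 0 ≤ C) (hy : 0 < y) (hp : p ≠ 0) :
    (C ^ p⁻¹ * y ^ (-(2 / p))) ^ p * y ^ 2 = C := by
  rw [mul_rpow_neg_rpow (rpow_nonneg hC _) hy.le, ← rpow_mul hC, inv_mul_cancel₀ hp, rpow_one,
    div_mul_cancel₀ _ hp, rpow_neg hy.le, rpow_two]
  field_simp

theorem le_mul_rpow_neg_of_sq_mul_rpow_le {x y p C : ℝ} (hx : 0 ≤ x) (hy : 0 < y) (hp : 0 < p)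
    (h : y ^ 2 * x ^ p ≤ C) : x ≤ C ^ p⁻¹ * y ^ (-(2 / p)) := by
  have hC : 0 ≤ C := le_trans (by positivity) h
  rw [← rpow_le_rpow_iff hx (by positivity) hp, ← mul_le_mul_iff_of_pos_right (pow_pos hy 2),
    rpow_inv_mul_rpow_neg_rpow_mul_sq hC hy hp.ne']
  linarith

theorem mul_rpow_neg_le_of_le_sq_mul_rpow {x y p C : ℝ} (hx : 0 ≤ x) (hy : 0 < y) (hp : 0 < p)
    (hC : 0 ≤ C) (h : C ≤ y ^ 2 * x ^ p) : C ^ p⁻¹ * y ^ (-(2 / p)) ≤ x := by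
  rw [← rpow_le_rpow_iff (by positivity) hx hp, ← mul_le_mul_iff_of_pos_right (pow_pos hy 2),
    rpow_inv_mul_rpow_neg_rpow_mul_sq hC hy hp.ne']
  linarith

end Real

theorem hasDerivAt_radial_flux {n : ℕ} (hn : 2 ≤ n) {m α β s u'' v' : ℝ} {u' v : ℝ → ℝ}
    (hm : m ≠ 0) (hs : s ≠ 0) (hu' : HasDerivAt u' u'' s) (hv : HasDerivAt v v' s)
    (hode : ((n : ℝ) - 1) / m * (u'' + ((n : ℝ) - 1) / s * u' s) + α * v s + β * s * v' = 0) :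
    HasDerivAt (fun t => ((n : ℝ) - 1) * t ^ (n - 1) * u' t + m * β * t ^ n * v t)
      (m * (n * β - α) * s ^ (n - 1) * v s) s := by
  obtain ⟨k, rfl⟩ : ∃ k, n = k + 2 := ⟨n - 2, by omega⟩
  simp only [show k + 2 - 1 = k + 1 from rfl]
  push_cast at hode ⊢
  have h := (((hasDerivAt_pow (k + 1) s).const_mul ((k : ℝ) + 2 - 1)).fun_mul hu').fun_add
    (((hasDerivAt_pow (k + 2) s).const_mul (m * β)).fun_mul hv)
  refine h.congr_deriv ?_
  field_simp at hode
  simp only [Nat.add_sub_cancel]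
  push_cast
  linear_combination s ^ k * hode

theorem abs_sub_le_setIntegral_Ioi_abs {H g : ℝ → ℝ} {a b : ℝ} (hab : a ≤ b)
    (hH : ∀ x ∈ Icc a b, HasDerivAt H (g x) x) (hg : IntegrableOn g (Ioi a)) :
    |H b - H a| ≤ ∫ x in Ioi a, |g x| := by
  have hgab : IntervalIntegrable g volume a b :=
    (intervalIntegrable_iff_integrableOn_Ioc_of_le hab).2 (hg.mono_set Ioc_subset_Ioi_self)
  rw [← intervalIntegral.integral_eq_sub_of_hasDerivAt (by rwa [uIcc_of_le hab]) hgab]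
  calc |∫ x in a..b, g x| ≤ ∫ x in a..b, |g x| := intervalIntegral.abs_integral_le_integral_abs hab
    _ = ∫ x in Ioc a b, |g x| := intervalIntegral.integral_of_le hab
    _ ≤ ∫ x in Ioi a, |g x| :=
      setIntegral_mono_set hg.abs (Eventually.of_forall fun _ => abs_nonneg _)
        Ioc_subset_Ioi_self.eventuallyLE

theorem abs_le_mul_rpow_of_abs_flux_le {n : ℕ} (hn : 2 ≤ n) {y q A b c g V : ℝ} (hy : 1 ≤ y)
    (hqn : q ≤ n) (hV : 0 ≤ V) (hVc : V ≤ c * y ^ (-q))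
    (h : |((n : ℝ) - 1) * y ^ (n - 1) * g + b * y ^ n * V| ≤ A) :
    |g| ≤ (A + |b| * c) * y ^ (1 - q) := by
  have hy0 : 0 < y := one_pos.trans_le hy
  have hn1 : (1 : ℝ) ≤ (n : ℝ) - 1 := by
    have : (2 : ℝ) ≤ n := by exact_mod_cast hn
    linarith
  have hA : 0 ≤ A := (abs_nonneg _).trans h
  have hc : 0 ≤ c := nonneg_of_mul_nonneg_left (hV.trans hVc) (Real.rpow_pos_of_pos hy0 _)
  have hpow : y ^ (n - 1) * y ^ (1 - q) = y ^ ((n : ℝ) - q) := by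
    rw [← Real.rpow_natCast, ← Real.rpow_add hy0, Nat.cast_sub (by omega)]
    ring_nf
  have hyn : y ^ n * y ^ (-q) = y ^ ((n : ℝ) - q) := by
    rw [← Real.rpow_natCast, ← Real.rpow_add hy0, sub_eq_add_neg]
  have hvterm : |b * y ^ n * V| ≤ |b| * c * y ^ ((n : ℝ) - q) := by
    rw [abs_mul, abs_mul, abs_of_pos (pow_pos hy0 n), abs_of_nonneg hV, ← hyn, mul_assoc,
      mul_assoc, mul_left_comm c]
    gcongr
  have hflux : y ^ (n - 1) * |g| ≤ A + |b| * c * y ^ ((n : ℝ) - q) :=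
    calc y ^ (n - 1) * |g| ≤ ((n : ℝ) - 1) * (y ^ (n - 1) * |g|) :=
          le_mul_of_one_le_left (by positivity) hn1
      _ = |((n : ℝ) - 1) * y ^ (n - 1) * g| := by
          rw [abs_mul, abs_mul, abs_of_nonneg (by linarith : (0 : ℝ) ≤ (n : ℝ) - 1),
            abs_of_pos (pow_pos hy0 _), mul_assoc]
      _ ≤ A + |b| * c * y ^ ((n : ℝ) - q) := by
          linarith [abs_sub_abs_le_abs_add (((n : ℝ) - 1) * y ^ (n - 1) * g) (b * y ^ n * V)]
  refine le_of_mul_le_mul_left ?_ (pow_pos hy0 (n - 1))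
  rw [mul_left_comm, hpow, add_mul]
  have : 1 ≤ y ^ ((n : ℝ) - q) := Real.one_le_rpow hy (by linarith)
  nlinarith

theorem mul_le_intervalIntegral_pow_mul {k : ℕ} {q b ε x : ℝ} {v : ℝ → ℝ} (hx : 1 ≤ x)
    (hε : 0 ≤ ε) (hb : 0 ≤ b) (hqk : q ≤ k + 1)
    (hv : ∀ s ∈ Icc x ((1 + ε) * x), b * x ^ (-q) ≤ v s)
    (hint : IntervalIntegrable (fun s => s ^ k * v s) volume x ((1 + ε) * x)) :
    ε * b ≤ ∫ s in x..(1 + ε) * x, s ^ k * v s := by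
  have hx0 : 0 < x := one_pos.trans_le hx
  have hxε : x ≤ (1 + ε) * x := by nlinarith
  calc ε * b ≤ ε * b * x ^ ((k : ℝ) + 1 - q) :=
        le_mul_of_one_le_right (by positivity) (Real.one_le_rpow hx (by linarith))
    _ = ((1 + ε) * x - x) * (x ^ k * (b * x ^ (-q))) := by
        rw [sub_eq_add_neg, Real.rpow_add hx0, Real.rpow_add hx0, Real.rpow_natCast,
          Real.rpow_one]
        ring
    _ = ∫ _ in x..(1 + ε) * x, x ^ k * (b * x ^ (-q)) := by
        rw [intervalIntegral.integral_const, smul_eq_mul]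
    _ ≤ ∫ s in x..(1 + ε) * x, s ^ k * v s :=
        intervalIntegral.integral_mono_on hxε intervalIntegrable_const hint fun s hs =>
          mul_le_mul (pow_le_pow_left₀ hx0.le hs.1 k) (hv s hs) (by positivity)
            (pow_nonneg (hx0.le.trans hs.1) k)

theorem tendsto_intervalIntegral_of_integrableOn_Ioi {ι : Type*} {l : Filter ι} [l.IsCountablyGenerated] {f : ℝ → ℝ}
    {a₀ : ℝ} {a b : ι → ℝ} (hf : IntegrableOn f (Ioi a₀)) (ha : Tendsto a l atTop)
    (hb : Tendsto b l atTop) : Tendsto (fun i => ∫ x in a i..b i, f x) l (𝓝 0) := by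
  have hint : ∀ c, a₀ ≤ c → IntervalIntegrable f volume a₀ c := fun c hc =>
    (intervalIntegrable_iff_integrableOn_Ioc_of_le hc).2 (hf.mono_set Ioc_subset_Ioi_self)
  have hlim := (intervalIntegral_tendsto_integral_Ioi a₀ hf hb).sub
    (intervalIntegral_tendsto_integral_Ioi a₀ hf ha)
  rw [sub_self] at hlim
  refine hlim.congr' ?_
  filter_upwards [ha.eventually_ge_atTop a₀, hb.eventually_ge_atTop a₀] with i hai hbi
  exact intervalIntegral.integral_interval_sub_left (hint _ hbi) (hint _ hai)

theorem mul_rpow_neg_le_of_abs_deriv_rpow_le {m q C a ε x s : ℝ} {v u' : ℝ → ℝ} (hm : 0 < m) (hm1 : m < 1)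
    (hq : q * (1 - m) = 2) (hx : 1 ≤ x) (hε : 0 ≤ ε) (ha : 0 ≤ a) (hεC : ε * C ≤ a ^ m / 2)
    (hv : ∀ y ∈ Icc x ((1 + ε) * x), 0 < v y)
    (hu : ∀ y ∈ Icc x ((1 + ε) * x), HasDerivAt (fun s => v s ^ m) (u' y) y)
    (hu' : ∀ y ∈ Icc x ((1 + ε) * x), |u' y| ≤ C * y ^ (1 - q))
    (hvx : a * x ^ (-q) ≤ v x) (hs : s ∈ Icc x ((1 + ε) * x)) :
    (a ^ m / 2) ^ m⁻¹ * x ^ (-q) ≤ v s := by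
  have hx0 : 0 < x := one_pos.trans_le hx
  have hq1 : 1 ≤ q := by nlinarith
  have hqm : -(q * m) = 2 - q := by linarith
  have hxI : x ∈ Icc x ((1 + ε) * x) := ⟨le_rfl, by nlinarith⟩
  have hC : 0 ≤ C :=
    nonneg_of_mul_nonneg_left ((abs_nonneg _).trans (hu' x hxI)) (Real.rpow_pos_of_pos hx0 _)
  have hux : a ^ m * x ^ (2 - q) ≤ v x ^ m := by
    rw [← hqm]
    exact (Real.mul_rpow_neg_le_iff ha hx0 (hv x hxI).le hm).1 hvx
  have hlip : |v s ^ m - v x ^ m| ≤ C * x ^ (1 - q) * (s - x) :=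
    norm_image_sub_le_of_norm_deriv_le_segment' (fun y hy => (hu y hy).hasDerivWithinAt)
      (fun y hy => (hu' y (Ico_subset_Icc_self hy)).trans <| mul_le_mul_of_nonneg_left
        (Real.rpow_le_rpow_of_nonpos hx0 hy.1 (by linarith)) hC) s hs
  have hstep : C * x ^ (1 - q) * (s - x) ≤ ε * C * x ^ (2 - q) := by
    have hxq : x ^ (2 - q) = x ^ (1 - q) * x := by
      rw [show 2 - q = (1 - q) + 1 by ring, Real.rpow_add hx0, Real.rpow_one]
    rw [hxq]
    have : s - x ≤ ε * x := by linarith [hs.2]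
    have : 0 ≤ C * x ^ (1 - q) := by positivity
    nlinarith
  have hus : (a ^ m / 2) * x ^ (2 - q) ≤ v s ^ m := by
    have : 0 ≤ x ^ (2 - q) := by positivity
    nlinarith [neg_abs_le (v s ^ m - v x ^ m)]
  refine (Real.mul_rpow_neg_le_iff (by positivity) hx0 (hv s hs).le hm).2 ?_
  rwa [← Real.rpow_mul (by positivity), inv_mul_cancel₀ hm.ne', Real.rpow_one, hqm]

theorem nonpos_of_tendsto_sq_mul_rpow {k : ℕ} {m q C L : ℝ} {v u' : ℝ → ℝ} {r : ℕ → ℝ}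
    (hm : 0 < m) (hm1 : m < 1) (hq : q * (1 - m) = 2) (hqk : q ≤ k + 1)
    (hv : ∀ y, 1 ≤ y → 0 < v y) (hu : ∀ y, 1 ≤ y → HasDerivAt (fun s => v s ^ m) (u' y) y)
    (hu' : ∀ y, 1 ≤ y → |u' y| ≤ C * y ^ (1 - q))
    (hint : IntegrableOn (fun s => s ^ k * v s) (Ioi 1)) (hr : Tendsto r atTop atTop)
    (hL : Tendsto (fun i => r i ^ 2 * v (r i) ^ (1 - m)) atTop (𝓝 L)) : L ≤ 0 := by
  by_contra! hL0
  have hp : 0 < 1 - m := by linarith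
  have hqp : 2 / (1 - m) = q := by rw [← hq, mul_div_cancel_right₀ _ hp.ne']
  have hC : 0 ≤ C := by simpa using (abs_nonneg _).trans (hu' 1 le_rfl)
  set a := (L / 2) ^ (1 - m)⁻¹
  have ha : 0 < a := by positivity
  set ε := a ^ m / (2 * (C + 1))
  have hε : 0 < ε := by positivity
  have hεC : ε * C ≤ a ^ m / 2 := by
    rw [div_mul_eq_mul_div, div_le_div_iff₀ (by positivity) two_pos]
    nlinarith [Real.rpow_pos_of_pos ha m]
  set b := (a ^ m / 2) ^ m⁻¹
  have hb : 0 < b := by positivity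
  have hmass : ∀ᶠ i in atTop, ε * b ≤ ∫ s in r i..(1 + ε) * r i, s ^ k * v s := by
    filter_upwards [hr.eventually_ge_atTop 1,
      hL.eventually (eventually_ge_nhds (half_lt_self hL0))] with i hx hw
    have hI : ∀ y ∈ Icc (r i) ((1 + ε) * r i), 1 ≤ y := fun y hy => hx.trans hy.1
    have hvx : a * r i ^ (-q) ≤ v (r i) := by
      rw [← hqp]
      exact Real.mul_rpow_neg_le_of_le_sq_mul_rpow (hv _ hx).le (by linarith) hp (by linarith) hw
    refine mul_le_intervalIntegral_pow_mul hx hε.le hb.le hqk (fun s hs =>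
      mul_rpow_neg_le_of_abs_deriv_rpow_le hm hm1 hq hx hε.le ha.le hεC (fun y hy => hv y (hI y hy))
        (fun y hy => hu y (hI y hy)) (fun y hy => hu' y (hI y hy)) hvx hs) ?_
    refine (intervalIntegrable_iff_integrableOn_Ioc_of_le (by nlinarith)).2
      (hint.mono_set fun y hy => hx.trans_lt hy.1)
  have hlim := tendsto_intervalIntegral_of_integrableOn_Ioi hint hr
    (hr.const_mul_atTop (by linarith : (0 : ℝ) < 1 + ε))
  linarith [ge_of_tendsto hlim hmass, mul_pos hε hb]

theorem exists_abs_deriv_rpow_le_mul_rpow {n : ℕ} (hn : 2 ≤ n) {m α β q C₁ : ℝ} {v : ℝ → ℝ}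
    (hm : 0 < m) (hm1 : m < 1) (hq : q * (1 - m) = 2) (hqn : q ≤ n)
    (hv : ContDiff ℝ 2 v) (hpos : ∀ r, 1 ≤ r → 0 < v r)
    (hode : ∀ r, 1 ≤ r → ((n : ℝ) - 1) / m * (deriv (deriv (fun s => v s ^ m)) r
        + (((n : ℝ) - 1) / r) * deriv (fun s => v s ^ m) r) + α * v r + β * r * deriv v r = 0)
    (hw : ∀ r, 1 ≤ r → r ^ 2 * v r ^ (1 - m) ≤ C₁)
    (hL1 : IntegrableOn (fun z => z ^ (n - 1) * v z) (Ioi 1)) :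
    ∃ C, ∀ y, 1 ≤ y → |deriv (fun s => v s ^ m) y| ≤ C * y ^ (1 - q) := by
  have hp : 0 < 1 - m := by linarith
  have hqp : 2 / (1 - m) = q := by rw [← hq, mul_div_cancel_right₀ _ hp.ne']
  set u := fun s => v s ^ m
  set H := fun t => ((n : ℝ) - 1) * t ^ (n - 1) * deriv u t + m * β * t ^ n * v t
  set g := fun s => m * (n * β - α) * s ^ (n - 1) * v s
  have hH : ∀ s ∈ Ici (1 : ℝ), HasDerivAt H (g s) s := fun s hs =>
    have hu : ContDiffAt ℝ 2 u s := hv.contDiffAt.rpow_const_of_ne (hpos s hs).ne'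
    hasDerivAt_radial_flux hn hm.ne' (by linarith [mem_Ici.1 hs])
      ((hu.derivWithin (by norm_num)).differentiableAt one_ne_zero).hasDerivAt
      (hv.differentiable two_ne_zero s).hasDerivAt (hode s hs)
  have hg : IntegrableOn g (Ioi 1) :=
    IntegrableOn.congr_fun (hL1.const_mul (m * (n * β - α)))
      (fun x _ => by simp only [g]; ring) measurableSet_Ioi
  have hHb : ∀ y, 1 ≤ y → |H y| ≤ |H 1| + ∫ x in Ioi 1, |g x| := fun y hy => by
    linarith [abs_sub_abs_le_abs_sub (H y) (H 1),
      abs_sub_le_setIntegral_Ioi_abs hy (fun x hx => hH x hx.1) hg]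
  refine ⟨|H 1| + (∫ x in Ioi 1, |g x|) + |m * β| * C₁ ^ (1 - m)⁻¹, fun y hy =>
    abs_le_mul_rpow_of_abs_flux_le hn hy hqn (hpos y hy).le ?_ (hHb y hy)⟩
  rw [← hqp]
  exact Real.le_mul_rpow_neg_of_sq_mul_rpow_le (hpos y hy).le (by linarith) hp (hw y hy)

theorem stmt_17_general (n : ℕ) (hn : 3 ≤ n) (m α β : ℝ)
    (hm : 0 < m) (hm2 : m < ((n : ℝ) - 2) / n)
    (v : ℝ → ℝ) (hv : ContDiff ℝ 2 v) (hpos : ∀ r, 0 ≤ r → 0 < v r)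
    (hode : ∀ r, 0 < r →
      ((n : ℝ) - 1) / m * (deriv (deriv (fun s => v s ^ m)) r
        + (((n : ℝ) - 1) / r) * deriv (fun s => v s ^ m) r)
      + α * v r + β * r * deriv v r = 0)
    (C₁ : ℝ) (hw : ∀ r, 1 ≤ r → r ^ 2 * v r ^ (1 - m) ≤ C₁)
    (hL1 : IntegrableOn (fun z => z ^ (n - 1) * v z) (Set.Ioi (0 : ℝ))) :
    ∀ (r : ℕ → ℝ) (L : ℝ), Tendsto r atTop atTop →
      Tendsto (fun i => (r i) ^ 2 * v (r i) ^ (1 - m)) atTop (𝓝 L) → L = 0 := by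
  intro r L hr hL
  rw [lt_div_iff₀ (by positivity)] at hm2
  have hm1 : m < 1 := by nlinarith
  have hq : 2 / (1 - m) * (1 - m) = 2 := div_mul_cancel₀ _ (by linarith)
  have hqn : 2 / (1 - m) ≤ n := by rw [div_le_iff₀ (by linarith)]; linarith
  have hv1 : ∀ y, 1 ≤ y → 0 < v y := fun y hy => hpos y (by linarith)
  have hL1₁ := hL1.mono_set (Ioi_subset_Ioi zero_le_one)
  obtain ⟨C, hC⟩ := exists_abs_deriv_rpow_le_mul_rpow (by omega) hm hm1 hq hqn hv hv1
    (fun y hy => hode y (by linarith)) hw hL1₁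
  have hu : ∀ y, 1 ≤ y → HasDerivAt (fun s => v s ^ m) (deriv (fun s => v s ^ m) y) y :=
    fun y hy => ((hv.differentiable two_ne_zero y).rpow_const (Or.inl (hv1 y hy).ne')).hasDerivAt
  refine le_antisymm (nonpos_of_tendsto_sq_mul_rpow hm hm1 hq ?_ hv1 hu hC hL1₁ hr hL) ?_
  · rw [Nat.cast_sub (by omega)]
    push_cast
    linarith
  · refine ge_of_tendsto hL ?_
    filter_upwards [hr.eventually_ge_atTop 1] with i hi
    have := hv1 _ hi
    positivity

theorem stmt_17 (n : ℕ) (hn : 3 ≤ n) (m ρ α β η : ℝ)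
    (hm : 0 < m) (hm2 : m < ((n : ℝ) - 2) / n) (hρ : 0 < ρ)
    (hα : α = (2 * β + ρ) / (1 - m)) (hη : 0 < η)
    (v : ℝ → ℝ) (hv : ContDiff ℝ 2 v) (hpos : ∀ r, 0 ≤ r → 0 < v r)
    (hode : ∀ r, 0 < r →
      ((n : ℝ) - 1) / m * (deriv (deriv (fun s => v s ^ m)) r
        + (((n : ℝ) - 1) / r) * deriv (fun s => v s ^ m) r)
      + α * v r + β * r * deriv v r = 0)
    (hv0 : v 0 = η) (hv0d : deriv v 0 = 0)
    (C₁ : ℝ) (hC₁ : 0 < C₁) (hw : ∀ r, 1 ≤ r → r ^ 2 * v r ^ (1 - m) ≤ C₁)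
    (hL1 : IntegrableOn (fun z => z ^ (n - 1) * v z) (Set.Ioi (0 : ℝ)))
    (hβ : β ≤ 0) :
    ∀ (r : ℕ → ℝ) (L : ℝ), Tendsto r atTop atTop →
      Tendsto (fun i => (r i) ^ 2 * v (r i) ^ (1 - m)) atTop (𝓝 L) → L = 0 :=
  stmt_17_general n hn m α β hm hm2 v hv hpos hode C₁ hw hL1
end
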